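/- arXiv:dg-ga/9610004 — 11 statements merged into one kernel-verified Lean document; each statement's English description precedes it below -/
import Mathlib

section
/- Let 0 < l, t, r, s, β < π/2 with r ≠ π/4 and t ≠ π/4. Then (l,t,r,s;β) satisfies the Lawson quadrilateral equations if and only if the following three equations hold: tan s = tan l · tan t; tan(2t) = cos β · tan(2r); and cos(2l) = √(cos²β · sin²(2r) + cos²(2r)). -/
open Real

/-- The Lawson quadrilateral equations among the four side lengths
`l, t, r, s` of a great-circle quadrilateral in the 3-sphere with three
right angles and one angle `β`. -/
def LawsonEq (l t r s β : ℝ) : Prop :=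
  Real.cos s * Real.cos r = Real.cos l * Real.cos t ∧
  Real.sin s * Real.cos r = Real.sin l * Real.sin t ∧
  Real.cos s * Real.cos l = Real.cos r * Real.cos t + Real.cos β * Real.sin r * Real.sin t ∧
  Real.sin s * Real.sin l = Real.cos r * Real.sin t - Real.cos β * Real.sin r * Real.cos t

lemma aux_sq_eq {a b : ℝ} (ha : 0 < a) (hb : 0 < b) (h : a ^ 2 = b ^ 2) : a = b := by
  nlinarith [sq_nonneg (a - b), sq_nonneg (a + b)]

lemma aux_cos_ne (x : ℝ) (h1 : 0 < x) (h2 : x < π / 2) (h4 : x ≠ π / 4) :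
    Real.cos (2 * x) ≠ 0 := by
  intro h
  have hpi := Real.pi_pos
  rw [Real.cos_eq_zero_iff] at h
  obtain ⟨n, hn⟩ := h
  have ha : (0 : ℝ) < 2 * n + 1 := by nlinarith
  have hb : (2 : ℝ) * n + 1 < 2 := by nlinarith
  have ha' : (0 : ℤ) < 2 * n + 1 := by exact_mod_cast ha
  have hb' : (2 : ℤ) * n + 1 < 2 := by exact_mod_cast hb
  have hn0 : n = 0 := by omega
  subst hn0
  apply h4
  push_cast at hn
  linarith

set_option maxHeartbeats 1000000 in
theorem stmt_0 (l t r s β : ℝ)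
    (hl : 0 < l ∧ l < π / 2) (ht : 0 < t ∧ t < π / 2)
    (hr : 0 < r ∧ r < π / 2) (hs : 0 < s ∧ s < π / 2)
    (hβ : 0 < β ∧ β < π / 2) (hr4 : r ≠ π / 4) (ht4 : t ≠ π / 4) :
    LawsonEq l t r s β ↔
      (Real.tan s = Real.tan l * Real.tan t ∧
       Real.tan (2 * t) = Real.cos β * Real.tan (2 * r) ∧
       Real.cos (2 * l) =
         Real.sqrt (Real.cos β ^ 2 * Real.sin (2 * r) ^ 2 + Real.cos (2 * r) ^ 2)) := by
  obtain ⟨hl1, hl2⟩ := hl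
  obtain ⟨ht1, ht2⟩ := ht
  obtain ⟨hr1, hr2⟩ := hr
  obtain ⟨hs1, hs2⟩ := hs
  obtain ⟨hb1, hb2⟩ := hβ
  have hpi := Real.pi_pos
  have hcl : 0 < Real.cos l := Real.cos_pos_of_mem_Ioo ⟨by linarith, hl2⟩
  have hct : 0 < Real.cos t := Real.cos_pos_of_mem_Ioo ⟨by linarith, ht2⟩
  have hcr : 0 < Real.cos r := Real.cos_pos_of_mem_Ioo ⟨by linarith, hr2⟩
  have hcs : 0 < Real.cos s := Real.cos_pos_of_mem_Ioo ⟨by linarith, hs2⟩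
  have hcb : 0 < Real.cos β := Real.cos_pos_of_mem_Ioo ⟨by linarith, hb2⟩
  have hsl : 0 < Real.sin l := Real.sin_pos_of_pos_of_lt_pi hl1 (by linarith)
  have hst : 0 < Real.sin t := Real.sin_pos_of_pos_of_lt_pi ht1 (by linarith)
  have hsr : 0 < Real.sin r := Real.sin_pos_of_pos_of_lt_pi hr1 (by linarith)
  have hss : 0 < Real.sin s := Real.sin_pos_of_pos_of_lt_pi hs1 (by linarith)
  have hs2r : 0 < Real.sin (2 * r) :=
    Real.sin_pos_of_pos_of_lt_pi (by linarith) (by linarith)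
  have hs2t : 0 < Real.sin (2 * t) :=
    Real.sin_pos_of_pos_of_lt_pi (by linarith) (by linarith)
  have hc2r : Real.cos (2 * r) ≠ 0 := aux_cos_ne r hr1 hr2 hr4
  have hc2t : Real.cos (2 * t) ≠ 0 := aux_cos_ne t ht1 ht2 ht4
  have hcl0 : Real.cos l ≠ 0 := hcl.ne'
  have hct0 : Real.cos t ≠ 0 := hct.ne'
  have hcs0 : Real.cos s ≠ 0 := hcs.ne'
  have ps := Real.sin_sq_add_cos_sq s
  have pl := Real.sin_sq_add_cos_sq l
  have pt := Real.sin_sq_add_cos_sq t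
  have p2t := Real.sin_sq_add_cos_sq (2 * t)
  unfold LawsonEq
  constructor
  · rintro ⟨h1, h2, h3, h4⟩
    have hVI : Real.cos (2 * r) = Real.cos (2 * l) * Real.cos (2 * t) := by
      rw [Real.cos_two_mul, Real.cos_two_mul, Real.cos_two_mul]
      linear_combination 2 * (Real.cos s * Real.cos r + Real.cos l * Real.cos t) * h1 +
        2 * (Real.sin s * Real.cos r + Real.sin l * Real.sin t) * h2 -
        2 * Real.cos r ^ 2 * ps + 2 * Real.sin t ^ 2 * pl + 2 * (1 - Real.cos l ^ 2) * pt
    have hV : Real.cos β * Real.sin (2 * r) = Real.cos (2 * l) * Real.sin (2 * t) := by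
      rw [Real.sin_two_mul, Real.sin_two_mul, Real.cos_two_mul]
      linear_combination (-2 * Real.cos r * Real.sin t) * h3 +
        (2 * Real.cos r * Real.cos t) * h4 -
        2 * Real.cos β * Real.sin r * Real.cos r * pt +
        2 * Real.cos l * Real.sin t * h1 - 2 * Real.sin l * Real.cos t * h2 -
        2 * Real.sin t * Real.cos t * pl
    refine ⟨?_, ?_, ?_⟩
    · rw [Real.tan_eq_sin_div_cos, Real.tan_eq_sin_div_cos, Real.tan_eq_sin_div_cos,
        div_mul_div_comm, div_eq_div_iff hcs0 (mul_ne_zero hcl0 hct0)]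
      linear_combination Real.cos s * h2 - Real.sin s * h1
    · rw [Real.tan_eq_sin_div_cos, Real.tan_eq_sin_div_cos, ← mul_div_assoc,
        div_eq_div_iff hc2t hc2r]
      linear_combination Real.sin (2 * t) * hVI - Real.cos (2 * t) * hV
    · have hE : Real.cos β ^ 2 * Real.sin (2 * r) ^ 2 + Real.cos (2 * r) ^ 2 =
          Real.cos (2 * l) ^ 2 := by
        linear_combination (Real.cos β * Real.sin (2 * r) + Real.cos (2 * l) * Real.sin (2 * t)) * hV +
          (Real.cos (2 * r) + Real.cos (2 * l) * Real.cos (2 * t)) * hVI +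
          Real.cos (2 * l) ^ 2 * p2t
      have hc2l : 0 < Real.cos (2 * l) := by
        nlinarith [mul_pos hcb hs2r, hV, hs2t]
      rw [hE, Real.sqrt_sq hc2l.le]
  · rintro ⟨hA, hB, hC⟩
    have hc2l : 0 < Real.cos (2 * l) := by
      rw [hC]
      apply Real.sqrt_pos.mpr
      have hpos : 0 < Real.cos β ^ 2 * Real.sin (2 * r) ^ 2 :=
        mul_pos (pow_pos hcb 2) (pow_pos hs2r 2)
      linarith [sq_nonneg (Real.cos (2 * r))]
    have hE : Real.cos (2 * l) ^ 2 =
        Real.cos β ^ 2 * Real.sin (2 * r) ^ 2 + Real.cos (2 * r) ^ 2 := by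
      rw [hC]
      exact Real.sq_sqrt (by positivity)
    have hB' : Real.sin (2 * t) * Real.cos (2 * r) =
        Real.cos β * Real.sin (2 * r) * Real.cos (2 * t) := by
      rw [Real.tan_eq_sin_div_cos, Real.tan_eq_sin_div_cos, ← mul_div_assoc,
        div_eq_div_iff hc2t hc2r] at hB
      linear_combination hB
    have hsq : (Real.cos (2 * l) * Real.cos (2 * t)) ^ 2 = Real.cos (2 * r) ^ 2 := by
      linear_combination Real.cos (2 * t) ^ 2 * hE -
        (Real.sin (2 * t) * Real.cos (2 * r) + Real.cos β * Real.sin (2 * r) * Real.cos (2 * t)) * hB' +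
        Real.cos (2 * r) ^ 2 * p2t
    have hVI2 : Real.cos (2 * r) = Real.cos (2 * l) * Real.cos (2 * t) := by
      have h0 : (Real.cos (2 * l) * Real.cos (2 * t) - Real.cos (2 * r)) *
          (Real.cos (2 * l) * Real.cos (2 * t) + Real.cos (2 * r)) = 0 := by
        linear_combination hsq
      rcases mul_eq_zero.mp h0 with h | h
      · linarith
      · exfalso
        have h2 : Real.cos (2 * t) *
            (Real.sin (2 * t) * Real.cos (2 * l) + Real.cos β * Real.sin (2 * r)) = 0 := by
          linear_combination Real.sin (2 * t) * h - hB'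
        rcases mul_eq_zero.mp h2 with h3 | h3
        · exact hc2t h3
        · nlinarith [mul_pos hs2t hc2l, mul_pos hcb hs2r]
    have hV2 : Real.cos β * Real.sin (2 * r) = Real.cos (2 * l) * Real.sin (2 * t) := by
      apply mul_right_cancel₀ hc2t
      linear_combination -hB' + Real.sin (2 * t) * hVI2
    have key2 : 2 * Real.cos r ^ 2 - 1 = (2 * Real.cos l ^ 2 - 1) * (2 * Real.cos t ^ 2 - 1) := by
      have h := hVI2
      rw [Real.cos_two_mul, Real.cos_two_mul, Real.cos_two_mul] at h
      linear_combination h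
    have hVs : Real.cos β * (2 * Real.sin r * Real.cos r) =
        (2 * Real.cos l ^ 2 - 1) * (2 * (Real.sin t * Real.cos t)) := by
      have h := hV2
      rw [Real.sin_two_mul, Real.sin_two_mul, Real.cos_two_mul] at h
      linear_combination h
    have hA' : Real.sin s * (Real.cos l * Real.cos t) = Real.cos s * (Real.sin l * Real.sin t) := by
      rw [Real.tan_eq_sin_div_cos, Real.tan_eq_sin_div_cos, Real.tan_eq_sin_div_cos,
        div_mul_div_comm, div_eq_div_iff hcs0 (mul_ne_zero hcl0 hct0)] at hA
      linear_combination hA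
    have h1 : Real.cos s * Real.cos r = Real.cos l * Real.cos t := by
      apply aux_sq_eq (mul_pos hcs hcr) (mul_pos hcl hct)
      linear_combination Real.cos l ^ 2 * Real.cos t ^ 2 * ps -
        (Real.sin s * Real.cos l * Real.cos t + Real.cos s * Real.sin l * Real.sin t) * hA' +
        Real.cos s ^ 2 / 2 * key2 - Real.cos s ^ 2 * Real.sin l ^ 2 * pt -
        Real.cos s ^ 2 * (1 - Real.cos t ^ 2) * pl
    have h2 : Real.sin s * Real.cos r = Real.sin l * Real.sin t := by
      apply mul_right_cancel₀ (ne_of_gt (mul_pos hcl hct))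
      linear_combination Real.cos r * hA' + Real.sin l * Real.sin t * h1
    have hI : Real.cos β * Real.sin r =
        Real.cos s * Real.cos l * Real.sin t - Real.sin s * Real.sin l * Real.cos t := by
      apply mul_left_cancel₀ (ne_of_gt hcr)
      linear_combination (1 / 2) * hVs + Real.sin t * Real.cos t * pl -
        Real.cos l * Real.sin t * h1 + Real.sin l * Real.cos t * h2
    refine ⟨h1, h2, ?_, ?_⟩
    · linear_combination Real.cos t * Real.cos r * ps - Real.cos t * Real.cos s * h1 -
        Real.cos t * Real.sin s * h2 - Real.sin t * hI - Real.cos s * Real.cos l * pt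
    · linear_combination Real.sin t * Real.cos r * ps - Real.sin t * Real.cos s * h1 -
        Real.sin t * Real.sin s * h2 + Real.cos t * hI - Real.sin s * Real.sin l * pt
end

section
/- For each β ∈ (0, π/2) and each r ∈ (0, π/2) with r ≠ π/4, there exist unique l ∈ (0, π/4), t ∈ (0, π/2) with t ≠ π/4, and s ∈ (0, π/2) such that cos(2l) = √(cos²β·sin²(2r) + cos²(2r)), tan(2t) = cos β·tan(2r), and tan s = tan l·tan t; moreover for these values (l,t,r,s;β) satisfies the Lawson quadrilateral equations, and 0 < l < β/2. Furthermore, for r = π/4 the tuple (β/2, π/4, π/4, β/2; β) satisfies the Lawson quadrilateral equations. -/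
open Real

lemma aux_cos_ne_zero {r : ℝ} (hr0 : 0 < r) (hr2 : r < π / 2) (hr4 : r ≠ π / 4) :
    Real.cos (2 * r) ≠ 0 := by
  intro h
  rcases Real.cos_eq_zero_iff.1 h with ⟨k, hk⟩
  have hπ := Real.pi_pos
  have h1 : (0:ℝ) < 2 * k + 1 := by nlinarith
  have h2 : (2:ℝ) * k + 1 < 2 := by nlinarith
  have hk0 : k = 0 := by
    have a1 : (0:ℤ) < 2 * k + 1 := by exact_mod_cast h1
    have a2 : (2:ℤ) * k + 1 < 2 := by exact_mod_cast h2
    omega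
  apply hr4
  rw [hk0] at hk
  push_cast at hk
  linarith

lemma aux_tan_neg {x : ℝ} (h1 : π / 2 < x) (h2 : x < π) : Real.tan x < 0 := by
  have hπ := Real.pi_pos
  rw [Real.tan_eq_sin_div_cos]
  apply div_neg_of_pos_of_neg
  · exact Real.sin_pos_of_pos_of_lt_pi (by linarith) h2
  · exact Real.cos_neg_of_pi_div_two_lt_of_lt h1 (by linarith)

lemma aux_tan_inj {x y : ℝ} (hx0 : 0 < x) (hxpi : x < π) (hx2 : x ≠ π / 2)
    (hy0 : 0 < y) (hypi : y < π) (hy2 : y ≠ π / 2) (h : Real.tan x = Real.tan y) : x = y := by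
  have hπ := Real.pi_pos
  rcases lt_or_gt_of_ne hx2 with hx | hx
  · have htx : 0 < Real.tan x := Real.tan_pos_of_pos_of_lt_pi_div_two hx0 hx
    have hy' : y < π / 2 := by
      by_contra hc
      push_neg at hc
      have h5 : Real.tan y < 0 := aux_tan_neg (lt_of_le_of_ne hc (Ne.symm hy2)) hypi
      linarith only [h, h5, htx]
    exact Real.injOn_tan ⟨by linarith, hx⟩ ⟨by linarith, hy'⟩ h
  · have htx : Real.tan x < 0 := aux_tan_neg hx hxpi
    have hy' : π / 2 < y := by
      by_contra hc
      push_neg at hc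
      have h5 : 0 < Real.tan y := Real.tan_pos_of_pos_of_lt_pi_div_two hy0 (lt_of_le_of_ne hc hy2)
      linarith only [h, h5, htx]
    have e1 : Real.tan (x - π) = Real.tan x := Real.tan_sub_pi x
    have e2 : Real.tan (y - π) = Real.tan y := Real.tan_sub_pi y
    have h6 : x - π = y - π :=
      Real.injOn_tan ⟨by linarith, by linarith⟩ ⟨by linarith, by linarith⟩
        (by rw [e1, e2, h])
    linarith only [h6]

set_option maxHeartbeats 1000000 in
lemma aux_key (β r l t s : ℝ) (hβ0 : 0 < β) (hβ : β < π / 2)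
    (hr0 : 0 < r) (hr2 : r < π / 2) (hr4 : r ≠ π / 4)
    (hl0 : 0 < l) (hl4 : l < π / 4)
    (ht0 : 0 < t) (ht2 : t < π / 2) (ht4 : t ≠ π / 4)
    (hs0 : 0 < s) (hs2 : s < π / 2)
    (h1 : Real.cos (2 * l) = Real.sqrt (Real.cos β ^ 2 * Real.sin (2 * r) ^ 2 + Real.cos (2 * r) ^ 2))
    (h2 : Real.tan (2 * t) = Real.cos β * Real.tan (2 * r))
    (h3 : Real.tan s = Real.tan l * Real.tan t) :
    LawsonEq l t r s β ∧ l < β / 2 := by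
  have hπ := Real.pi_pos
  have hc0 : 0 < Real.cos β := Real.cos_pos_of_mem_Ioo ⟨by linarith, hβ⟩
  have hc1 : Real.cos β < 1 := by
    have := Real.cos_lt_cos_of_nonneg_of_le_pi (le_refl 0) (by linarith) hβ0
    simpa using this
  have hs2r : 0 < Real.sin (2 * r) := Real.sin_pos_of_pos_of_lt_pi (by linarith) (by linarith)
  have hc2r : Real.cos (2 * r) ≠ 0 := aux_cos_ne_zero hr0 hr2 hr4
  have hc2t : Real.cos (2 * t) ≠ 0 := aux_cos_ne_zero ht0 ht2 ht4
  have hs2t : 0 < Real.sin (2 * t) := Real.sin_pos_of_pos_of_lt_pi (by linarith) (by linarith)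
  have hc2rsq : 0 < Real.cos (2 * r) ^ 2 := by positivity
  obtain ⟨D, hDdef⟩ : ∃ D, Real.sqrt (Real.cos β ^ 2 * Real.sin (2 * r) ^ 2 + Real.cos (2 * r) ^ 2) = D :=
    ⟨_, rfl⟩
  rw [hDdef] at h1
  have hD2 : D ^ 2 = Real.cos β ^ 2 * Real.sin (2 * r) ^ 2 + Real.cos (2 * r) ^ 2 := by
    rw [← hDdef]; exact Real.sq_sqrt (by positivity)
  have hD0 : 0 < D := by rw [← hDdef]; exact Real.sqrt_pos.2 (by positivity)
  clear hDdef
  have ht' : Real.sin (2 * t) * Real.cos (2 * r) =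
      Real.cos β * Real.sin (2 * r) * Real.cos (2 * t) := by
    rw [Real.tan_eq_sin_div_cos, Real.tan_eq_sin_div_cos] at h2
    field_simp at h2
    linear_combination h2
  have hsign : 0 < Real.cos (2 * t) * Real.cos (2 * r) := by
    have hk : Real.cos β * Real.sin (2 * r) * (Real.cos (2 * t) * Real.cos (2 * r)) =
        Real.sin (2 * t) * Real.cos (2 * r) ^ 2 := by linear_combination (- Real.cos (2 * r)) * ht'
    have h5 : 0 < Real.cos β * Real.sin (2 * r) := mul_pos hc0 hs2r
    have h6 : 0 < Real.sin (2 * t) * Real.cos (2 * r) ^ 2 := mul_pos hs2t hc2rsq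
    by_contra hn
    push_neg at hn
    have h7 : Real.cos β * Real.sin (2 * r) * (Real.cos (2 * t) * Real.cos (2 * r)) ≤ 0 :=
      mul_nonpos_of_nonneg_of_nonpos h5.le hn
    linarith only [hk, h6, h7]
  have hsq : (Real.cos (2 * t) * D) ^ 2 = Real.cos (2 * r) ^ 2 := by
    have hpyt := Real.sin_sq_add_cos_sq (2 * t)
    linear_combination Real.cos (2 * t) ^ 2 * hD2 + Real.cos (2 * r) ^ 2 * hpyt -
      (Real.sin (2 * t) * Real.cos (2 * r) + Real.cos β * Real.sin (2 * r) * Real.cos (2 * t)) * ht'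
  have hcc : Real.cos (2 * t) * D = Real.cos (2 * r) := by
    have h' : (Real.cos (2 * t) * D - Real.cos (2 * r)) *
        (Real.cos (2 * t) * D + Real.cos (2 * r)) = 0 := by linear_combination hsq
    rcases mul_eq_zero.1 h' with h | h
    · linarith only [h]
    · exfalso
      have h6 : Real.cos (2 * t) * Real.cos (2 * r) * D = -(Real.cos (2 * r) ^ 2) := by
        linear_combination Real.cos (2 * r) * h
      have h7 : 0 < Real.cos (2 * t) * Real.cos (2 * r) * D := mul_pos hsign hD0
      linarith only [h6, h7, hc2rsq]
  have hss : Real.sin (2 * t) * D = Real.cos β * Real.sin (2 * r) := by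
    have h' : Real.sin (2 * t) * D * Real.cos (2 * r) =
        Real.cos β * Real.sin (2 * r) * Real.cos (2 * r) := by
      linear_combination D * ht' + Real.cos β * Real.sin (2 * r) * hcc
    exact mul_right_cancel₀ hc2r h'
  have hal : 0 < Real.cos l := Real.cos_pos_of_mem_Ioo ⟨by linarith, by linarith⟩
  have hAl : 0 < Real.sin l := Real.sin_pos_of_pos_of_lt_pi hl0 (by linarith)
  have hbt : 0 < Real.cos t := Real.cos_pos_of_mem_Ioo ⟨by linarith, ht2⟩
  have hBt : 0 < Real.sin t := Real.sin_pos_of_pos_of_lt_pi ht0 (by linarith)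
  have hur : 0 < Real.cos r := Real.cos_pos_of_mem_Ioo ⟨by linarith, hr2⟩
  have hvr : 0 < Real.sin r := Real.sin_pos_of_pos_of_lt_pi hr0 (by linarith)
  have hps : 0 < Real.cos s := Real.cos_pos_of_mem_Ioo ⟨by linarith, hs2⟩
  have hqs : 0 < Real.sin s := Real.sin_pos_of_pos_of_lt_pi hs0 (by linarith)
  have F1 : 2 * Real.cos l ^ 2 - 1 = D := by
    rw [← Real.cos_two_mul]; exact h1
  have F2 : (2 * Real.cos t ^ 2 - 1) * D = 2 * Real.cos r ^ 2 - 1 := by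
    rw [← Real.cos_two_mul, ← Real.cos_two_mul]; exact hcc
  have F3 : Real.sin t * Real.cos t * D = Real.cos β * (Real.sin r * Real.cos r) := by
    have h' := hss
    rw [Real.sin_two_mul, Real.sin_two_mul] at h'
    linarith only [h']
  have F4 : Real.sin s * (Real.cos l * Real.cos t) =
      Real.cos s * (Real.sin l * Real.sin t) := by
    rw [Real.tan_eq_sin_div_cos, Real.tan_eq_sin_div_cos, Real.tan_eq_sin_div_cos] at h3
    field_simp at h3
    linear_combination h3
  have Pa := Real.sin_sq_add_cos_sq l
  have Pb := Real.sin_sq_add_cos_sq t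
  have Pp := Real.sin_sq_add_cos_sq s
  have F12 : (2 * Real.cos t ^ 2 - 1) * (2 * Real.cos l ^ 2 - 1) = 2 * Real.cos r ^ 2 - 1 := by
    linear_combination F2 + (2 * Real.cos t ^ 2 - 1) * F1
  have hXY : (Real.cos l * Real.cos t) ^ 2 + (Real.sin l * Real.sin t) ^ 2 = Real.cos r ^ 2 := by
    linear_combination Real.sin t ^ 2 * Pa + (1 - Real.cos l ^ 2) * Pb + (1/2) * F12
  have G1 : Real.cos s * Real.cos r = Real.cos l * Real.cos t := by
    have hsq1 : (Real.cos s * Real.cos r) ^ 2 = (Real.cos l * Real.cos t) ^ 2 := by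
      linear_combination (- Real.cos s ^ 2) * hXY + (Real.cos l * Real.cos t) ^ 2 * Pp -
        (Real.sin s * (Real.cos l * Real.cos t) + Real.cos s * (Real.sin l * Real.sin t)) * F4
    have h' : (Real.cos s * Real.cos r - Real.cos l * Real.cos t) *
        (Real.cos s * Real.cos r + Real.cos l * Real.cos t) = 0 := by linear_combination hsq1
    rcases mul_eq_zero.1 h' with h | h
    · linarith only [h]
    · exfalso
      have h6 : 0 < Real.cos s * Real.cos r := mul_pos hps hur
      have h7 : 0 < Real.cos l * Real.cos t := mul_pos hal hbt
      linarith only [h, h6, h7]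
  have G2 : Real.sin s * Real.cos r = Real.sin l * Real.sin t := by
    have h' : (Real.sin s * Real.cos r) * (Real.cos l * Real.cos t) =
        (Real.sin l * Real.sin t) * (Real.cos l * Real.cos t) := by
      linear_combination Real.cos r * F4 + Real.sin l * Real.sin t * G1
    exact mul_right_cancel₀ (by positivity) h'
  have G3 : Real.cos s * Real.cos l = Real.cos r * Real.cos t + Real.cos β * Real.sin r * Real.sin t := by
    have h' : (Real.cos s * Real.cos l) * Real.cos r =
        (Real.cos r * Real.cos t + Real.cos β * Real.sin r * Real.sin t) * Real.cos r := by
      linear_combination Real.cos l * G1 + Real.sin t * F3 + (Real.cos t / 2) * F1 +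
        (Real.cos t / 2) * F2 - Real.cos t * D * Pb
    exact mul_right_cancel₀ (ne_of_gt hur) h'
  have G4 : Real.sin s * Real.sin l = Real.cos r * Real.sin t - Real.cos β * Real.sin r * Real.cos t := by
    have h' : (Real.sin s * Real.sin l) * Real.cos r =
        (Real.cos r * Real.sin t - Real.cos β * Real.sin r * Real.cos t) * Real.cos r := by
      linear_combination Real.sin l * G2 - Real.cos t * F3 + Real.sin t * Pa -
        (Real.sin t / 2) * F1 + (Real.sin t / 2) * F2
    exact mul_right_cancel₀ (ne_of_gt hur) h'
  refine ⟨⟨G1, G2, G3, G4⟩, ?_⟩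
  have hDc : Real.cos β < D := by
    have e : D ^ 2 - Real.cos β ^ 2 = Real.cos (2 * r) ^ 2 * (1 - Real.cos β ^ 2) := by
      linear_combination hD2 + Real.cos β ^ 2 * Real.sin_sq_add_cos_sq (2 * r)
    have hb1 : 0 < 1 - Real.cos β ^ 2 := by
      have e2 : (1 - Real.cos β) * (1 + Real.cos β) = 1 - Real.cos β ^ 2 := by ring
      have e3 : 0 < (1 - Real.cos β) * (1 + Real.cos β) :=
        mul_pos (by linarith only [hc1]) (by linarith only [hc0])
      linarith only [e2, e3]
    have hpos : 0 < Real.cos (2 * r) ^ 2 * (1 - Real.cos β ^ 2) := mul_pos hc2rsq hb1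
    have hsq' : Real.cos β ^ 2 < D ^ 2 := by linarith only [e, hpos]
    exact lt_of_pow_lt_pow_left₀ 2 hD0.le hsq'
  by_contra hcon
  push_neg at hcon
  have h2l : β ≤ 2 * l := by linarith
  rcases eq_or_lt_of_le h2l with h | h
  · have he : Real.cos β = D := by rw [h]; exact h1
    linarith only [he, hDc]
  · have hlt := Real.cos_lt_cos_of_nonneg_of_le_pi (by linarith : (0:ℝ) ≤ β) (by linarith) h
    rw [h1] at hlt
    linarith only [hlt, hDc]

set_option maxHeartbeats 1000000 in
theorem stmt_1 (β : ℝ) (hβ0 : 0 < β) (hβ : β < π / 2) :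
    (∀ r : ℝ, 0 < r → r < π / 2 → r ≠ π / 4 →
      (∃! p : ℝ × ℝ × ℝ,
        (0 < p.1 ∧ p.1 < π / 4) ∧
        (0 < p.2.1 ∧ p.2.1 < π / 2 ∧ p.2.1 ≠ π / 4) ∧
        (0 < p.2.2 ∧ p.2.2 < π / 2) ∧
        Real.cos (2 * p.1) =
          Real.sqrt (Real.cos β ^ 2 * Real.sin (2 * r) ^ 2 + Real.cos (2 * r) ^ 2) ∧
        Real.tan (2 * p.2.1) = Real.cos β * Real.tan (2 * r) ∧
        Real.tan p.2.2 = Real.tan p.1 * Real.tan p.2.1) ∧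
      (∀ l t s : ℝ,
        (0 < l ∧ l < π / 4) →
        (0 < t ∧ t < π / 2 ∧ t ≠ π / 4) →
        (0 < s ∧ s < π / 2) →
        Real.cos (2 * l) =
          Real.sqrt (Real.cos β ^ 2 * Real.sin (2 * r) ^ 2 + Real.cos (2 * r) ^ 2) →
        Real.tan (2 * t) = Real.cos β * Real.tan (2 * r) →
        Real.tan s = Real.tan l * Real.tan t →
        LawsonEq l t r s β ∧ 0 < l ∧ l < β / 2)) ∧
    LawsonEq (β / 2) (π / 4) (π / 4) (β / 2) β := by
  have hπ := Real.pi_pos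
  have hc0 : 0 < Real.cos β := Real.cos_pos_of_mem_Ioo ⟨by linarith, hβ⟩
  have hc1 : Real.cos β < 1 := by
    have := Real.cos_lt_cos_of_nonneg_of_le_pi (le_refl 0) (by linarith) hβ0
    simpa using this
  constructor
  · intro r hr0 hr2 hr4
    have hs2r : 0 < Real.sin (2 * r) := Real.sin_pos_of_pos_of_lt_pi (by linarith) (by linarith)
    have hc2r : Real.cos (2 * r) ≠ 0 := aux_cos_ne_zero hr0 hr2 hr4
    have hc2rsq : 0 < Real.cos (2 * r) ^ 2 := by positivity
    set E := Real.cos β ^ 2 * Real.sin (2 * r) ^ 2 + Real.cos (2 * r) ^ 2 with hE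
    have hE0 : 0 < E := by positivity
    have hE1 : E < 1 := by
      have e1 : Real.cos β ^ 2 * Real.sin (2 * r) ^ 2 < 1 * Real.sin (2 * r) ^ 2 := by
        apply mul_lt_mul_of_pos_right _ (by positivity)
        have e2 : (1 - Real.cos β) * (1 + Real.cos β) = 1 - Real.cos β ^ 2 := by ring
        have e3 : 0 < (1 - Real.cos β) * (1 + Real.cos β) :=
          mul_pos (by linarith only [hc1]) (by linarith only [hc0])
        linarith only [e2, e3]
      have e4 := Real.sin_sq_add_cos_sq (2 * r)
      rw [hE]
      linarith only [e1, e4]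
    have hD0 : 0 < Real.sqrt E := Real.sqrt_pos.2 hE0
    have hD1 : Real.sqrt E < 1 := by
      have := Real.sqrt_lt_sqrt hE0.le hE1
      simpa using this
    -- construct l₀
    set l₀ := Real.arccos (Real.sqrt E) / 2 with hl₀def
    have ha0 : 0 < Real.arccos (Real.sqrt E) := Real.arccos_pos.2 hD1
    have ha2 : Real.arccos (Real.sqrt E) < π / 2 := Real.arccos_lt_pi_div_two.2 hD0
    have hl₀0 : 0 < l₀ := by rw [hl₀def]; linarith
    have hl₀4 : l₀ < π / 4 := by rw [hl₀def]; linarith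
    have hl₀c : Real.cos (2 * l₀) = Real.sqrt E := by
      rw [hl₀def, show 2 * (Real.arccos (Real.sqrt E) / 2) = Real.arccos (Real.sqrt E) by ring]
      exact Real.cos_arccos (by linarith) hD1.le
    -- construct t₀
    obtain ⟨t₀, ht₀0, ht₀2, ht₀4, ht₀tan⟩ :
        ∃ t₀, 0 < t₀ ∧ t₀ < π / 2 ∧ t₀ ≠ π / 4 ∧
          Real.tan (2 * t₀) = Real.cos β * Real.tan (2 * r) := by
      rcases lt_or_gt_of_ne hr4 with hcase | hcase
      · have htr : 0 < Real.tan (2 * r) :=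
          Real.tan_pos_of_pos_of_lt_pi_div_two (by linarith) (by linarith)
        have harg : 0 < Real.cos β * Real.tan (2 * r) := mul_pos hc0 htr
        have haa : 0 < Real.arctan (Real.cos β * Real.tan (2 * r)) := by
          rw [← Real.arctan_zero]; exact Real.arctan_strictMono harg
        have hab := Real.arctan_lt_pi_div_two (Real.cos β * Real.tan (2 * r))
        refine ⟨Real.arctan (Real.cos β * Real.tan (2 * r)) / 2, by linarith, by linarith,
          (by linarith : Real.arctan (Real.cos β * Real.tan (2 * r)) / 2 < π / 4).ne, ?_⟩
        rw [show 2 * (Real.arctan (Real.cos β * Real.tan (2 * r)) / 2) =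
          Real.arctan (Real.cos β * Real.tan (2 * r)) by ring]
        exact Real.tan_arctan _
      · have htr : Real.tan (2 * r) < 0 := aux_tan_neg (by linarith) (by linarith)
        have harg : Real.cos β * Real.tan (2 * r) < 0 := mul_neg_of_pos_of_neg hc0 htr
        have haa : Real.arctan (Real.cos β * Real.tan (2 * r)) < 0 := by
          rw [← Real.arctan_zero]; exact Real.arctan_strictMono harg
        have hab := Real.neg_pi_div_two_lt_arctan (Real.cos β * Real.tan (2 * r))
        refine ⟨(Real.arctan (Real.cos β * Real.tan (2 * r)) + π) / 2, by linarith, by linarith,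
          (by linarith : (π / 4 : ℝ) < (Real.arctan (Real.cos β * Real.tan (2 * r)) + π) / 2).ne', ?_⟩
        rw [show 2 * ((Real.arctan (Real.cos β * Real.tan (2 * r)) + π) / 2) =
          Real.arctan (Real.cos β * Real.tan (2 * r)) + π by ring,
          Real.tan_add_pi]
        exact Real.tan_arctan _
    -- construct s₀
    have htl₀ : 0 < Real.tan l₀ := Real.tan_pos_of_pos_of_lt_pi_div_two hl₀0 (by linarith)
    have htt₀ : 0 < Real.tan t₀ := Real.tan_pos_of_pos_of_lt_pi_div_two ht₀0 ht₀2
    set s₀ := Real.arctan (Real.tan l₀ * Real.tan t₀) with hs₀def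
    have hs₀0 : 0 < s₀ := by
      rw [hs₀def, ← Real.arctan_zero]; exact Real.arctan_strictMono (mul_pos htl₀ htt₀)
    have hs₀2 : s₀ < π / 2 := Real.arctan_lt_pi_div_two _
    have hs₀tan : Real.tan s₀ = Real.tan l₀ * Real.tan t₀ := Real.tan_arctan _
    constructor
    · refine ⟨⟨l₀, t₀, s₀⟩, ⟨⟨hl₀0, hl₀4⟩, ⟨ht₀0, ht₀2, ht₀4⟩, ⟨hs₀0, hs₀2⟩, hl₀c, ht₀tan, hs₀tan⟩, ?_⟩
      rintro ⟨l', t', s'⟩ ⟨⟨hl0, hl4⟩, ⟨ht0, ht2, ht4⟩, ⟨hs0, hs2⟩, hcl, htt, hts⟩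
      simp only at hl0 hl4 ht0 ht2 ht4 hs0 hs2 hcl htt hts
      have hleq : l' = l₀ := by
        have h2l : (2:ℝ) * l' = 2 * l₀ :=
          Real.injOn_cos ⟨by linarith, by linarith⟩ ⟨by linarith, by linarith⟩
            (by rw [hcl, hl₀c])
        linarith only [h2l]
      have hteq : t' = t₀ := by
        have h2t : (2:ℝ) * t' = 2 * t₀ := by
          apply aux_tan_inj (by linarith) (by linarith)
            (fun hh => ht4 (by linarith only [hh]))
            (by linarith) (by linarith) (fun hh => ht₀4 (by linarith only [hh]))
          rw [htt, ht₀tan]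
        linarith only [h2t]
      have hseq : s' = s₀ := by
        apply Real.injOn_tan ⟨by linarith, hs2⟩ ⟨by linarith, hs₀2⟩
        rw [hts, hs₀tan, hleq, hteq]
      rw [hleq, hteq, hseq]
    · intro l t s hl ht hs h1 h2 h3
      obtain ⟨hl0, hl4⟩ := hl
      obtain ⟨ht0, ht2, ht4⟩ := ht
      obtain ⟨hs0, hs2⟩ := hs
      obtain ⟨hLE, hlb⟩ := aux_key β r l t s hβ0 hβ hr0 hr2 hr4 hl0 hl4 ht0 ht2 ht4 hs0 hs2 h1 h2 h3
      exact ⟨hLE, hl0, hlb⟩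
  · -- the r = π/4 case
    have e := Real.cos_two_mul (β / 2)
    rw [show 2 * (β / 2) = β by ring] at e
    have hp := Real.sin_sq_add_cos_sq (β / 2)
    have hs2 : Real.sqrt 2 ^ 2 = 2 := Real.sq_sqrt (by norm_num)
    refine ⟨rfl, ?_, ?_, ?_⟩
    · rw [Real.cos_pi_div_four, Real.sin_pi_div_four]
    · rw [Real.cos_pi_div_four, Real.sin_pi_div_four]
      linear_combination (-(1:ℝ)/2) * e - ((1 + Real.cos β) / 4) * hs2
    · rw [Real.cos_pi_div_four, Real.sin_pi_div_four]
      linear_combination hp + (1/2 : ℝ) * e - ((1 - Real.cos β) / 4) * hs2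
end

section
/- Fix β ∈ (0, π/2). For r ∈ (0, π/2) define l(r) ∈ (0, π/4] by cos(2·l(r)) = √(cos²β·sin²(2r) + cos²(2r)); define t(r) ∈ (0, π/2) as the unique value with tan(2·t(r)) = cos β·tan(2r) for r ≠ π/4 (so t(r) ∈ (0,π/4) for r < π/4 and t(r) ∈ (π/4,π/2) for r > π/4) and t(π/4) = π/4; and define s(r) := arctan(tan l(r) · tan t(r)) ∈ (0, π/2). Then t and s are strictly increasing on (0, π/2); moreover t(r) → 0 and s(r) → 0 as r → 0⁺, while t(r) → π/2 and s(r) → β as r → (π/2)⁻. -/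
/-!
Put `x = 2r` and `c = cos β`. The equation for `t` says that `(cos 2t, sin 2t)` is the unit
vector in the direction of the point `(cos x, c sin x)` of an ellipse, whose distance to the origin
is `R = √(c² sin² x + cos² x)`; hence `2t = arccos (cos x / R)`. The equation for `l` says
`cos 2l = R`, so `sin 2l = sin β sin x`, and the half-angle formulas turn `tan l · tan t` into
`tan β · (R - cos x) / (1 + R)`. Both `arccos (cos x / R)` and `(R - cos x) / (1 + R)` are
continuous in `x` on all of `ℝ` and have positive derivative on `(0, π)` (the derivative of
`cos x / R` is `-c² sin x / R³`), so `t` and `s` are strictly increasing and their one-sided limits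
are the values at `x = 0` and `x = π`.
-/

open Real Filter Set Topology

-- Both sides are `0` where the denominators vanish.
theorem tan_eq_sin_two_mul_div (θ : ℝ) : tan θ = sin (2 * θ) / (1 + cos (2 * θ)) := by
  rw [tan_eq_sin_div_cos, sin_two_mul, cos_two_mul]
  rcases eq_or_ne (cos θ) 0 with h | h
  · simp [h]
  · field_simp
    ring

theorem tan_eq_one_sub_cos_two_mul_div (θ : ℝ) : tan θ = (1 - cos (2 * θ)) / sin (2 * θ) := by
  rw [tan_eq_sin_div_cos, sin_two_mul, cos_two_mul]
  rcases eq_or_ne (sin θ) 0 with hs | hs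
  · simp [hs]
  rcases eq_or_ne (cos θ) 0 with hc | hc
  · simp [hc]
  field_simp
  linear_combination 2 * sin_sq_add_cos_sq θ

theorem one_add_cos_pos_of_sin_pos {x : ℝ} (hx : 0 < sin x) : 0 < 1 + cos x := by
  nlinarith [sin_sq_add_cos_sq x, neg_one_le_cos x]

theorem sin_mul_cos_eq_of_tan_eq {θ x c : ℝ} (h : tan θ = c * tan x) (hc : c ≠ 0)
    (hsx : sin x ≠ 0) (hcx : cos x ≠ 0) : sin θ * cos x = c * sin x * cos θ := by
  have hcθ : cos θ ≠ 0 := by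
    intro hcθ
    rw [tan_eq_sin_div_cos, tan_eq_sin_div_cos, hcθ, div_zero] at h
    exact mul_ne_zero hc (div_ne_zero hsx hcx) h.symm
  rw [tan_eq_sin_div_cos, tan_eq_sin_div_cos] at h
  field_simp at h
  linear_combination h

theorem strictMonoOn_and_tendsto_of_eqOn_comp_two_mul {F u : ℝ → ℝ} (hF : Continuous F)
    (hF_mono : StrictMonoOn F (Icc 0 π)) (hu : EqOn u (fun r => F (2 * r)) (Ioo 0 (π / 2))) :
    StrictMonoOn u (Ioo 0 (π / 2)) ∧ Tendsto u (𝓝[>] 0) (𝓝 (F 0)) ∧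
      Tendsto u (𝓝[<] (π / 2)) (𝓝 (F π)) := by
  have hFc : Continuous fun r => F (2 * r) := hF.comp (continuous_const_mul 2)
  refine ⟨fun a ha b hb hab => ?_, ?_, ?_⟩
  · rw [hu ha, hu hb]
    exact hF_mono ⟨by linarith [ha.1], by linarith [ha.2]⟩
      ⟨by linarith [hb.1], by linarith [hb.2]⟩ (by linarith)
  · refine Tendsto.congr' (hu.eventuallyEq_of_mem (Ioo_mem_nhdsGT (by positivity))).symm ?_
    simpa using (hFc.tendsto 0).mono_left nhdsWithin_le_nhds
  · refine Tendsto.congr' (hu.eventuallyEq_of_mem (Ioo_mem_nhdsLT (by positivity))).symm ?_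
    simpa [mul_div_cancel₀] using (hFc.tendsto (π / 2)).mono_left nhdsWithin_le_nhds

noncomputable def ellipseRadius (c x : ℝ) : ℝ := √(c ^ 2 * sin x ^ 2 + cos x ^ 2)

section EllipseRadius
variable {c : ℝ}

theorem ellipseRadius_sq (c x : ℝ) : ellipseRadius c x ^ 2 = c ^ 2 * sin x ^ 2 + cos x ^ 2 :=
  sq_sqrt (by positivity)

theorem ellipseRadius_nonneg (c x : ℝ) : 0 ≤ ellipseRadius c x := sqrt_nonneg _

theorem ellipseRadius_pos (hc : c ≠ 0) (x : ℝ) : 0 < ellipseRadius c x := by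
  refine sqrt_pos.2 ?_
  rcases eq_or_ne (cos x) 0 with h | h
  · have hs : sin x ^ 2 = 1 := by nlinarith [sin_sq_add_cos_sq x]
    rw [h, hs]
    positivity
  · positivity

theorem abs_cos_le_ellipseRadius (c x : ℝ) : |cos x| ≤ ellipseRadius c x :=
  abs_le_sqrt (le_add_of_nonneg_left (by positivity))

theorem abs_cos_div_ellipseRadius_le_one (c x : ℝ) : |cos x / ellipseRadius c x| ≤ 1 := by
  rw [abs_div, abs_of_nonneg (ellipseRadius_nonneg c x)]
  exact div_le_one_of_le₀ (abs_cos_le_ellipseRadius c x) (ellipseRadius_nonneg c x)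

theorem continuous_ellipseRadius (c : ℝ) : Continuous (ellipseRadius c) := by
  unfold ellipseRadius
  fun_prop

theorem continuous_cos_div_ellipseRadius (hc : c ≠ 0) :
    Continuous fun x => cos x / ellipseRadius c x :=
  continuous_cos.div (continuous_ellipseRadius c) fun x => (ellipseRadius_pos hc x).ne'

theorem hasDerivAt_ellipseRadius (hc : c ≠ 0) (x : ℝ) :
    HasDerivAt (ellipseRadius c) ((c ^ 2 - 1) * sin x * cos x / ellipseRadius c x) x := by
  have h : HasDerivAt (fun y => c ^ 2 * sin y ^ 2 + cos y ^ 2)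
      (2 * (c ^ 2 - 1) * sin x * cos x) x := by
    refine ((((hasDerivAt_sin x).fun_pow 2).const_mul (c ^ 2)).fun_add
      ((hasDerivAt_cos x).fun_pow 2)).congr_deriv ?_
    push_cast
    ring
  refine (h.sqrt (sqrt_pos.1 (ellipseRadius_pos hc x)).ne').congr_deriv ?_
  unfold ellipseRadius
  field_simp

theorem hasDerivAt_cos_div_ellipseRadius (hc : c ≠ 0) (x : ℝ) :
    HasDerivAt (fun y => cos y / ellipseRadius c y)
      (-(c ^ 2 * sin x) / ellipseRadius c x ^ 3) x := by
  have hR := ellipseRadius_pos hc x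
  refine ((hasDerivAt_cos x).div (hasDerivAt_ellipseRadius hc x) hR.ne').congr_deriv ?_
  field_simp
  linear_combination (-sin x) * ellipseRadius_sq c x - c ^ 2 * sin x * sin_sq_add_cos_sq x

theorem strictAntiOn_cos_div_ellipseRadius (hc : c ≠ 0) :
    StrictAntiOn (fun x => cos x / ellipseRadius c x) (Icc 0 π) := by
  refine strictAntiOn_of_deriv_neg (convex_Icc 0 π)
    (continuous_cos_div_ellipseRadius hc).continuousOn fun x hx => ?_
  rw [interior_Icc] at hx
  have := sin_pos_of_pos_of_lt_pi hx.1 hx.2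
  have := ellipseRadius_pos hc x
  rw [(hasDerivAt_cos_div_ellipseRadius hc x).deriv, neg_div]
  exact neg_neg_of_pos (by positivity)

end EllipseRadius

-- For `x ∈ [0, π]`, the polar angle of the point `(cos x, c sin x)`; it is the paper's `2 t(x / 2)`.
noncomputable def ellipseAngle (c x : ℝ) : ℝ := arccos (cos x / ellipseRadius c x)

noncomputable def tanProductFactor (c x : ℝ) : ℝ :=
  (ellipseRadius c x - cos x) / (1 + ellipseRadius c x)

section EllipseAngle
variable {c : ℝ}

theorem continuous_ellipseAngle (hc : c ≠ 0) : Continuous (ellipseAngle c) :=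
  continuous_arccos.comp (continuous_cos_div_ellipseRadius hc)

@[simp] theorem ellipseAngle_zero (c : ℝ) : ellipseAngle c 0 = 0 := by
  simp [ellipseAngle, ellipseRadius]

@[simp] theorem ellipseAngle_pi (c : ℝ) : ellipseAngle c π = π := by
  simp [ellipseAngle, ellipseRadius]

theorem strictMonoOn_ellipseAngle (hc : c ≠ 0) : StrictMonoOn (ellipseAngle c) (Icc 0 π) :=
  fun x hx y hy hxy =>
    strictAntiOn_arccos (abs_le.1 (abs_cos_div_ellipseRadius_le_one c y))
      (abs_le.1 (abs_cos_div_ellipseRadius_le_one c x))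
      (strictAntiOn_cos_div_ellipseRadius hc hx hy hxy)

theorem continuous_tanProductFactor (c : ℝ) : Continuous (tanProductFactor c) :=
  ((continuous_ellipseRadius c).sub continuous_cos).div
    (continuous_const.add (continuous_ellipseRadius c))
    fun x => (add_pos_of_pos_of_nonneg one_pos (ellipseRadius_nonneg c x)).ne'

@[simp] theorem tanProductFactor_zero (c : ℝ) : tanProductFactor c 0 = 0 := by
  simp [tanProductFactor, ellipseRadius]

@[simp] theorem tanProductFactor_pi (c : ℝ) : tanProductFactor c π = 1 := by
  simp [tanProductFactor, ellipseRadius]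

theorem hasDerivAt_tanProductFactor (hc : c ≠ 0) (x : ℝ) :
    HasDerivAt (tanProductFactor c)
      (sin x * (ellipseRadius c x - cos x + c ^ 2 * (1 + cos x)) /
        (ellipseRadius c x * (1 + ellipseRadius c x) ^ 2)) x := by
  have hR := ellipseRadius_pos hc x
  refine (((hasDerivAt_ellipseRadius hc x).fun_sub (hasDerivAt_cos x)).div
    ((hasDerivAt_ellipseRadius hc x).const_add 1) (by positivity)).congr_deriv ?_
  field_simp
  linear_combination sin x * ellipseRadius_sq c x + c ^ 2 * sin x * sin_sq_add_cos_sq x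

theorem strictMonoOn_tanProductFactor (hc : c ≠ 0) :
    StrictMonoOn (tanProductFactor c) (Icc 0 π) := by
  refine strictMonoOn_of_deriv_pos (convex_Icc 0 π)
    (continuous_tanProductFactor c).continuousOn fun x hx => ?_
  rw [interior_Icc] at hx
  have hsin := sin_pos_of_pos_of_lt_pi hx.1 hx.2
  have := ellipseRadius_pos hc x
  have := one_add_cos_pos_of_sin_pos hsin
  have := sub_nonneg.2 ((le_abs_self (cos x)).trans (abs_cos_le_ellipseRadius c x))
  rw [(hasDerivAt_tanProductFactor hc x).deriv]
  positivity

end EllipseAngle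

section LawsonAngles
variable {c x θ : ℝ}

theorem cos_eq_and_sin_eq_of_sin_mul_cos_eq (hc : 0 < c) (hx : 0 < sin x) (hθ : 0 < sin θ)
    (h : sin θ * cos x = c * sin x * cos θ) :
    cos θ = cos x / ellipseRadius c x ∧ sin θ = c * sin x / ellipseRadius c x := by
  set k := sin θ / (c * sin x)
  have hk : 0 < k := by positivity
  have hcos : cos θ = k * cos x := by
    simp only [k]
    field_simp
    linear_combination -h
  have hsin : sin θ = k * (c * sin x) := by
    simp only [k]
    field_simp
  have hR := ellipseRadius_pos hc.ne' x
  have hkR : k * ellipseRadius c x = 1 := by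
    refine (pow_left_inj₀ (mul_pos hk hR).le zero_le_one two_ne_zero).1 ?_
    have hθ1 := sin_sq_add_cos_sq θ
    rw [hcos, hsin] at hθ1
    rw [mul_pow, ellipseRadius_sq, one_pow]
    linear_combination hθ1
  constructor
  · rw [eq_div_iff hR.ne', hcos]
    linear_combination cos x * hkR
  · rw [eq_div_iff hR.ne', hsin]
    linear_combination c * sin x * hkR

theorem eq_ellipseAngle_of_sin_mul_cos_eq (hc : 0 < c) (hx : 0 < sin x) (hθ : θ ∈ Ioo 0 π)
    (h : sin θ * cos x = c * sin x * cos θ) : θ = ellipseAngle c x := by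
  rw [ellipseAngle, ← (cos_eq_and_sin_eq_of_sin_mul_cos_eq hc hx
    (sin_pos_of_pos_of_lt_pi hθ.1 hθ.2) h).1, arccos_cos hθ.1.le hθ.2.le]

theorem sin_eq_of_cos_eq_ellipseRadius {β φ : ℝ} (hφ : 0 ≤ sin φ) (hβ : 0 ≤ sin β)
    (hx : 0 ≤ sin x) (h : cos φ = ellipseRadius (cos β) x) : sin φ = sin β * sin x := by
  refine (pow_left_inj₀ hφ (mul_nonneg hβ hx) two_ne_zero).1 ?_
  have hR := ellipseRadius_sq (cos β) x
  rw [← h] at hR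
  linear_combination sin_sq_add_cos_sq φ - hR - sin_sq_add_cos_sq x
    - sin x ^ 2 * sin_sq_add_cos_sq β

theorem tan_mul_tan_eq_tan_mul_tanProductFactor {β l t : ℝ} (hcβ : 0 < cos β)
    (hsβ : 0 < sin β) (hx : 0 < sin x)
    (hl : 0 ≤ sin (2 * l)) (hl_eq : cos (2 * l) = ellipseRadius (cos β) x)
    (ht : 0 < sin (2 * t)) (ht_eq : sin (2 * t) * cos x = cos β * sin x * cos (2 * t)) :
    tan l * tan t = tan β * tanProductFactor (cos β) x := by
  obtain ⟨hcos, hsin⟩ := cos_eq_and_sin_eq_of_sin_mul_cos_eq hcβ hx ht ht_eq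
  have hR := ellipseRadius_pos hcβ.ne' x
  rw [tan_eq_sin_two_mul_div l, tan_eq_one_sub_cos_two_mul_div t,
    sin_eq_of_cos_eq_ellipseRadius hl hsβ.le hx.le hl_eq, hl_eq, hcos, hsin, tan_eq_sin_div_cos,
    tanProductFactor]
  field_simp

end LawsonAngles

theorem stmt_3_general (β : ℝ) (hβ0 : 0 < β) (hβ : β < π / 2)
    (l t s : ℝ → ℝ)
    (hl_mem : ∀ r ∈ Set.Ioo (0 : ℝ) (π / 2), 0 < l r ∧ l r ≤ π / 4)
    (hl_eq : ∀ r ∈ Set.Ioo (0 : ℝ) (π / 2),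
      Real.cos (2 * l r) =
        Real.sqrt (Real.cos β ^ 2 * Real.sin (2 * r) ^ 2 + Real.cos (2 * r) ^ 2))
    (ht_mem : ∀ r ∈ Set.Ioo (0 : ℝ) (π / 2), 0 < t r ∧ t r < π / 2)
    (ht_eq : ∀ r ∈ Set.Ioo (0 : ℝ) (π / 2), r ≠ π / 4 →
      Real.tan (2 * t r) = Real.cos β * Real.tan (2 * r))
    (ht_mid : t (π / 4) = π / 4)
    (hs_def : ∀ r ∈ Set.Ioo (0 : ℝ) (π / 2),
      s r = Real.arctan (Real.tan (l r) * Real.tan (t r))) :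
    StrictMonoOn t (Set.Ioo 0 (π / 2)) ∧
    StrictMonoOn s (Set.Ioo 0 (π / 2)) ∧
    Tendsto t (nhdsWithin 0 (Set.Ioi 0)) (nhds 0) ∧
    Tendsto s (nhdsWithin 0 (Set.Ioi 0)) (nhds 0) ∧
    Tendsto t (nhdsWithin (π / 2) (Set.Iio (π / 2))) (nhds (π / 2)) ∧
    Tendsto s (nhdsWithin (π / 2) (Set.Iio (π / 2))) (nhds β) := by
  have hcβ : 0 < cos β := cos_pos_of_mem_Ioo ⟨by linarith [pi_pos], hβ⟩
  have hsβ : 0 < sin β := sin_pos_of_pos_of_lt_pi hβ0 (by linarith [pi_pos])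
  have h2r : ∀ r ∈ Ioo 0 (π / 2), 2 * r ∈ Ioo 0 π := fun r hr =>
    ⟨by linarith [hr.1], by linarith [hr.2]⟩
  have hsin : ∀ r ∈ Ioo 0 (π / 2), 0 < sin (2 * r) := fun r hr =>
    sin_pos_of_pos_of_lt_pi (h2r r hr).1 (h2r r hr).2
  have ht_cross : ∀ r ∈ Ioo 0 (π / 2),
      sin (2 * t r) * cos (2 * r) = cos β * sin (2 * r) * cos (2 * t r) := by
    intro r hr
    rcases eq_or_ne r (π / 4) with rfl | hr4
    · simp [ht_mid, show 2 * (π / 4) = π / 2 by ring]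
    refine sin_mul_cos_eq_of_tan_eq (ht_eq r hr hr4) hcβ.ne' (hsin r hr).ne' fun h => hr4 ?_
    have := injOn_cos (Ioo_subset_Icc_self (h2r r hr)) ⟨by positivity, by linarith [pi_pos]⟩
      (h.trans cos_pi_div_two.symm)
    linarith
  have ht : EqOn t (fun r => ellipseAngle (cos β) (2 * r) / 2) (Ioo 0 (π / 2)) := fun r hr => by
    have := eq_ellipseAngle_of_sin_mul_cos_eq hcβ (hsin r hr) (h2r _ (ht_mem r hr)) (ht_cross r hr)
    dsimp only
    linarith
  have hs : EqOn s (fun r => arctan (tan β * tanProductFactor (cos β) (2 * r)))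
      (Ioo 0 (π / 2)) := fun r hr => by
    rw [hs_def r hr, tan_mul_tan_eq_tan_mul_tanProductFactor hcβ hsβ (hsin r hr)
      (sin_nonneg_of_nonneg_of_le_pi (by linarith [hl_mem r hr]) (by linarith [hl_mem r hr]))
      (hl_eq r hr) (hsin _ (ht_mem r hr)) (ht_cross r hr)]
  obtain ⟨ht_mono, ht_zero, ht_pi⟩ := strictMonoOn_and_tendsto_of_eqOn_comp_two_mul
    ((continuous_ellipseAngle hcβ.ne').div_const 2)
    (fun a ha b hb hab => by linarith [strictMonoOn_ellipseAngle hcβ.ne' ha hb hab]) ht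
  obtain ⟨hs_mono, hs_zero, hs_pi⟩ := strictMonoOn_and_tendsto_of_eqOn_comp_two_mul
    (F := fun x => arctan (tan β * tanProductFactor (cos β) x))
    (continuous_arctan.comp (continuous_const.mul (continuous_tanProductFactor _)))
    (arctan_strictMono.comp_strictMonoOn fun a ha b hb hab =>
      mul_lt_mul_of_pos_left (strictMonoOn_tanProductFactor hcβ.ne' ha hb hab)
        (tan_pos_of_pos_of_lt_pi_div_two hβ0 hβ)) hs
  simp only [ellipseAngle_zero, ellipseAngle_pi, tanProductFactor_zero, tanProductFactor_pi,
    zero_div, mul_zero, mul_one, arctan_zero, arctan_tan (by linarith) hβ]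
    at ht_zero ht_pi hs_zero hs_pi
  exact ⟨ht_mono, hs_mono, ht_zero, hs_zero, ht_pi, hs_pi⟩

theorem stmt_3 (β : ℝ) (hβ0 : 0 < β) (hβ : β < π / 2)
    (l t s : ℝ → ℝ)
    (hl_mem : ∀ r ∈ Set.Ioo (0 : ℝ) (π / 2), 0 < l r ∧ l r ≤ π / 4)
    (hl_eq : ∀ r ∈ Set.Ioo (0 : ℝ) (π / 2),
      Real.cos (2 * l r) =
        Real.sqrt (Real.cos β ^ 2 * Real.sin (2 * r) ^ 2 + Real.cos (2 * r) ^ 2))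
    (ht_mem : ∀ r ∈ Set.Ioo (0 : ℝ) (π / 2), 0 < t r ∧ t r < π / 2)
    (ht_lt : ∀ r ∈ Set.Ioo (0 : ℝ) (π / 2), r < π / 4 → t r < π / 4)
    (ht_gt : ∀ r ∈ Set.Ioo (0 : ℝ) (π / 2), π / 4 < r → π / 4 < t r)
    (ht_eq : ∀ r ∈ Set.Ioo (0 : ℝ) (π / 2), r ≠ π / 4 →
      Real.tan (2 * t r) = Real.cos β * Real.tan (2 * r))
    (ht_mid : t (π / 4) = π / 4)
    (hs_def : ∀ r ∈ Set.Ioo (0 : ℝ) (π / 2),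
      s r = Real.arctan (Real.tan (l r) * Real.tan (t r)))
    (hs_mem : ∀ r ∈ Set.Ioo (0 : ℝ) (π / 2), 0 < s r ∧ s r < π / 2) :
    StrictMonoOn t (Set.Ioo 0 (π / 2)) ∧
    StrictMonoOn s (Set.Ioo 0 (π / 2)) ∧
    Tendsto t (nhdsWithin 0 (Set.Ioi 0)) (nhds 0) ∧
    Tendsto s (nhdsWithin 0 (Set.Ioi 0)) (nhds 0) ∧
    Tendsto t (nhdsWithin (π / 2) (Set.Iio (π / 2))) (nhds (π / 2)) ∧
    Tendsto s (nhdsWithin (π / 2) (Set.Iio (π / 2))) (nhds β) :=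
  stmt_3_general β hβ0 hβ l t s hl_mem hl_eq ht_mem ht_eq ht_mid hs_def
end

section
/- Let 0 < l₁ < π/4 and l₁ < r < π/2 − l₁. Then 0 < (cos²(2l₁) − cos²(2r))/sin²(2r) ≤ cos²(2l₁), with equality on the right if and only if r = π/4. Consequently there is a unique β ∈ [2l₁, π/2) with cos²β = (cos²(2l₁) − cos²(2r))/sin²(2r), and β = 2l₁ if and only if r = π/4. -/
open Real


lemma aux_unique_beta (a v : ℝ) (ha0 : 0 < a) (ha2 : a < π / 2)
    (hv0 : 0 < v) (hvle : v ≤ Real.cos a ^ 2) :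
    ∃! β : ℝ, (a ≤ β ∧ β < π / 2) ∧ Real.cos β ^ 2 = v := by
  have hca : 0 < Real.cos a := Real.cos_pos_of_mem_Ioo ⟨by linarith [Real.pi_pos], ha2⟩
  have hvsqrt_le : Real.sqrt v ≤ Real.cos a := by
    rw [show Real.cos a = Real.sqrt (Real.cos a ^ 2) from (Real.sqrt_sq hca.le).symm]
    exact Real.sqrt_le_sqrt hvle
  have hca1 : Real.cos a ≤ 1 := Real.cos_le_one a
  have hvsqrt_pos : 0 < Real.sqrt v := Real.sqrt_pos.mpr hv0
  have hvsqrt_le1 : Real.sqrt v ≤ 1 := by linarith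
  refine ⟨Real.arccos (Real.sqrt v), ⟨⟨?_, ?_⟩, ?_⟩, ?_⟩
  · have harc : Real.arccos (Real.cos a) ≤ Real.arccos (Real.sqrt v) := by
      rw [Real.arccos, Real.arccos]
      linarith [Real.monotone_arcsin hvsqrt_le]
    rwa [Real.arccos_cos ha0.le (by linarith [Real.pi_pos])] at harc
  · exact (Real.arccos_lt_pi_div_two).mpr hvsqrt_pos
  · rw [Real.cos_arccos (by linarith) hvsqrt_le1, Real.sq_sqrt hv0.le]
  · rintro β ⟨⟨hβ1, hβ2⟩, hβ3⟩
    have hβcos : 0 < Real.cos β := Real.cos_pos_of_mem_Ioo ⟨by linarith [Real.pi_pos], hβ2⟩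
    have hc : Real.cos β = Real.sqrt v := by
      rw [← hβ3, Real.sqrt_sq hβcos.le]
    rw [← hc, Real.arccos_cos (by linarith) (by linarith [Real.pi_pos])]

theorem stmt_6 (l₁ r : ℝ) (hl₁0 : 0 < l₁) (hl₁ : l₁ < π / 4)
    (hrl : l₁ < r) (hru : r < π / 2 - l₁) :
    0 < (Real.cos (2 * l₁) ^ 2 - Real.cos (2 * r) ^ 2) / Real.sin (2 * r) ^ 2 ∧
    (Real.cos (2 * l₁) ^ 2 - Real.cos (2 * r) ^ 2) / Real.sin (2 * r) ^ 2 ≤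
      Real.cos (2 * l₁) ^ 2 ∧
    ((Real.cos (2 * l₁) ^ 2 - Real.cos (2 * r) ^ 2) / Real.sin (2 * r) ^ 2 =
      Real.cos (2 * l₁) ^ 2 ↔ r = π / 4) ∧
    (∃! β : ℝ, (2 * l₁ ≤ β ∧ β < π / 2) ∧
      Real.cos β ^ 2 =
        (Real.cos (2 * l₁) ^ 2 - Real.cos (2 * r) ^ 2) / Real.sin (2 * r) ^ 2) ∧
    (∀ β : ℝ, (2 * l₁ ≤ β ∧ β < π / 2) →
      Real.cos β ^ 2 =
        (Real.cos (2 * l₁) ^ 2 - Real.cos (2 * r) ^ 2) / Real.sin (2 * r) ^ 2 →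
      (β = 2 * l₁ ↔ r = π / 4)) := by
  have hπ := Real.pi_pos
  have ha0 : 0 < 2 * l₁ := by linarith
  have ha2 : 2 * l₁ < π / 2 := by linarith
  have h2r0 : 0 < 2 * r := by linarith
  have h2rπ : 2 * r < π := by linarith
  have hsin : 0 < Real.sin (2 * r) := Real.sin_pos_of_pos_of_lt_pi h2r0 h2rπ
  have hca : 0 < Real.cos (2 * l₁) :=
    Real.cos_pos_of_mem_Ioo ⟨by linarith, ha2⟩
  have hca1 : Real.cos (2 * l₁) < 1 := by
    have := Real.cos_lt_cos_of_nonneg_of_le_pi le_rfl (by linarith) ha0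
    simpa using this
  have hlt : Real.cos (2 * r) < Real.cos (2 * l₁) :=
    Real.cos_lt_cos_of_nonneg_of_le_pi (by linarith) (by linarith) (by linarith)
  have hgt : -Real.cos (2 * l₁) < Real.cos (2 * r) := by
    have h := Real.cos_lt_cos_of_nonneg_of_le_pi (by linarith : (0:ℝ) ≤ 2*r)
      (by linarith) (by linarith : 2 * r < π - 2 * l₁)
    rw [Real.cos_pi_sub] at h
    linarith
  have hsq : Real.cos (2 * r) ^ 2 < Real.cos (2 * l₁) ^ 2 := by
    have := sq_lt_sq' hgt hlt
    simpa using this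
  have hnum : 0 < Real.cos (2 * l₁) ^ 2 - Real.cos (2 * r) ^ 2 := by linarith
  have hs2 : 0 < Real.sin (2 * r) ^ 2 := by positivity
  have hpyth : Real.sin (2 * r) ^ 2 + Real.cos (2 * r) ^ 2 = 1 := Real.sin_sq_add_cos_sq _
  set v := (Real.cos (2 * l₁) ^ 2 - Real.cos (2 * r) ^ 2) / Real.sin (2 * r) ^ 2 with hv
  clear_value v
  have hv0 : 0 < v := by rw [hv]; exact div_pos hnum hs2
  have hca2lt1 : Real.cos (2 * l₁) ^ 2 < 1 := by nlinarith
  have hvle : v ≤ Real.cos (2 * l₁) ^ 2 := by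
    rw [hv, div_le_iff₀ hs2]
    nlinarith [sq_nonneg (Real.cos (2 * r))]
  -- equality iff cos(2r) = 0 iff r = π/4
  have hcoseq : Real.cos (2 * r) = 0 ↔ r = π / 4 := by
    constructor
    · intro h
      have h2 : Real.cos (2 * r) = Real.cos (π / 2) := by rw [h, Real.cos_pi_div_two]
      have := Real.injOn_cos (by constructor <;> linarith) (by constructor <;> linarith) h2
      linarith
    · intro h
      rw [h, show 2 * (π / 4) = π / 2 by ring, Real.cos_pi_div_two]
  have hiff : v = Real.cos (2 * l₁) ^ 2 ↔ r = π / 4 := by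
    rw [← hcoseq]
    constructor
    · intro h
      rw [hv, div_eq_iff (ne_of_gt hs2)] at h
      have : Real.cos (2 * r) ^ 2 * (1 - Real.cos (2 * l₁) ^ 2) = 0 := by nlinarith
      have h1 : (1 - Real.cos (2 * l₁) ^ 2) ≠ 0 := by nlinarith
      have := mul_eq_zero.mp this
      rcases this with h2 | h2
      · exact pow_eq_zero_iff (by norm_num) |>.mp h2
      · exact absurd h2 h1
    · intro h
      have hs1 : Real.sin (2 * r) ^ 2 = 1 := by nlinarith
      rw [hv, h, hs1]
      norm_num
  refine ⟨hv0, hvle, hiff, ?_, ?_⟩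
  · exact aux_unique_beta (2 * l₁) v ha0 ha2 hv0 hvle
  · -- final iff
    intro β ⟨hβ1, hβ2⟩ hβ3
    rw [← hiff]
    constructor
    · intro h; rw [h] at hβ3; exact hβ3.symm
    · intro h
      have hβcos : 0 < Real.cos β := Real.cos_pos_of_mem_Ioo ⟨by linarith, hβ2⟩
      have hc : Real.cos β = Real.cos (2 * l₁) := by
        have he : Real.cos β ^ 2 = Real.cos (2 * l₁) ^ 2 := by rw [hβ3, h]
        rw [← Real.sqrt_sq hβcos.le, he, Real.sqrt_sq hca.le]
      exact Real.injOn_cos ⟨by linarith, by linarith⟩ ⟨by linarith, by linarith⟩ hc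
end

section
/- Let l₁, l₂ ∈ (0, π/4] and r ∈ (0, π/2) satisfy sin²(2l₁) + sin²(2l₂) = sin²(2r). Then l₁ + l₂ ≤ π/4, with equality if and only if r = π/4. (In terms of the neckradii ρᵢ := 2lᵢ/π of the two pairs of ends of a rectangular 4-unduloid, this says ρ₁ + ρ₂ ≤ 1/2.) -/
open Real

theorem stmt_7 (l₁ l₂ r : ℝ)
    (hl₁ : 0 < l₁ ∧ l₁ ≤ π / 4) (hl₂ : 0 < l₂ ∧ l₂ ≤ π / 4)
    (hr : 0 < r ∧ r < π / 2)
    (h : Real.sin (2 * l₁) ^ 2 + Real.sin (2 * l₂) ^ 2 = Real.sin (2 * r) ^ 2) :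
    l₁ + l₂ ≤ π / 4 ∧ (l₁ + l₂ = π / 4 ↔ r = π / 4) := by
  obtain ⟨hl₁0, hl₁4⟩ := hl₁
  obtain ⟨hl₂0, hl₂4⟩ := hl₂
  obtain ⟨hr0, hr2⟩ := hr
  have hπ := Real.pi_pos
  have hmem₁ : 2 * l₁ ∈ Set.Icc (-(π/2)) (π/2) := by
    constructor <;> nlinarith
  have hmem₂ : (π/2 - 2 * l₂) ∈ Set.Icc (-(π/2)) (π/2) := by
    constructor <;> nlinarith
  have hsin₁ : 0 ≤ Real.sin (2 * l₁) := Real.sin_nonneg_of_nonneg_of_le_pi (by linarith) (by linarith)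
  have hcos₂ : 0 ≤ Real.cos (2 * l₂) := Real.cos_nonneg_of_mem_Icc ⟨by linarith, by linarith⟩
  have hcseq : Real.cos (2 * l₂) = Real.sin (π/2 - 2 * l₂) := by
    rw [Real.sin_pi_div_two_sub]
  have hle1 : Real.sin (2 * r) ^ 2 ≤ 1 := Real.sin_sq_le_one _
  have hpyth := Real.sin_sq_add_cos_sq (2 * l₂)
  -- sin(2l₁)^2 ≤ cos(2l₂)^2
  have hsq : Real.sin (2 * l₁) ^ 2 ≤ Real.cos (2 * l₂) ^ 2 := by nlinarith
  have hsle : Real.sin (2 * l₁) ≤ Real.cos (2 * l₂) := by nlinarith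
  have hmain : l₁ + l₂ ≤ π / 4 := by
    have := (Real.strictMonoOn_sin.le_iff_le hmem₁ hmem₂).mp (by rw [← hcseq]; exact hsle)
    linarith
  refine ⟨hmain, ?_, ?_⟩
  · intro heq
    have h2 : (2 : ℝ) * l₁ = π/2 - 2 * l₂ := by linarith
    have hs : Real.sin (2 * l₁) = Real.cos (2 * l₂) := by rw [h2, Real.sin_pi_div_two_sub]
    have hsr : Real.sin (2 * r) ^ 2 = 1 := by nlinarith
    have hcr : Real.cos (2 * r) = 0 := by nlinarith [Real.sin_sq_add_cos_sq (2 * r)]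
    have : (2 * r : ℝ) = π/2 := Real.injOn_cos ⟨by linarith, by linarith⟩
      ⟨by linarith, by linarith⟩ (by rw [hcr, Real.cos_pi_div_two])
    linarith
  · intro heq
    subst heq
    have hsr : Real.sin (2 * (π/4)) = 1 := by
      rw [show 2 * (π/4) = π/2 by ring, Real.sin_pi_div_two]
    rw [hsr] at h
    have hs : Real.sin (2 * l₁) = Real.cos (2 * l₂) := by nlinarith
    have := Real.strictMonoOn_sin.injOn hmem₁ hmem₂ (by rw [← hcseq]; exact hs)
    linarith
end

section
/- Let 0 < α < π/2 and 0 < r < π/2 with π²/4 − 2 cos α · r(π − r) ≥ 0. Then the function b ↦ f(α, r, b) is differentiable with derivative ∂f/∂b = −2 sin(2α − 4b)·sin²(2r), and f(α, r, ·) is strictly decreasing on the interval [α/2 − π/4, α/2]. -/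
open Real

/-- The function whose zeros parametrize the boundary contours associated to
isosceles triunduloids. -/
noncomputable def isoF (α r b : ℝ) : ℝ :=
  Real.sin (α - 2 * b) ^ 2 * Real.sin (2 * r) ^ 2 + Real.cos (2 * r) ^ 2 -
    Real.sin (Real.sqrt (π ^ 2 / 4 - 2 * Real.cos α * (r * (π - r)))) ^ 2

lemma hasDerivAt_sin_sq (x : ℝ) : HasDerivAt (fun x => sin x ^ 2) (sin (2 * x)) x := by
  refine ((hasDerivAt_sin x).pow 2).congr_deriv ?_
  rw [sin_two_mul]
  ring

lemma hasDerivAt_isoF (α r b : ℝ) :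
    HasDerivAt (isoF α r) (-2 * sin (2 * α - 4 * b) * sin (2 * r) ^ 2) b := by
  have hinner : HasDerivAt (fun b : ℝ => α - 2 * b) (-2) b := by
    simpa using ((hasDerivAt_id b).const_mul 2).const_sub α
  have hsq : HasDerivAt (fun b => sin (α - 2 * b) ^ 2) (sin (2 * (α - 2 * b)) * -2) b :=
    (hasDerivAt_sin_sq _).comp b hinner
  have hF : isoF α r = fun b => sin (α - 2 * b) ^ 2 * sin (2 * r) ^ 2 -
      (sin (√(π ^ 2 / 4 - 2 * cos α * (r * (π - r)))) ^ 2 - cos (2 * r) ^ 2) := by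
    funext b
    simp only [isoF]
    ring
  rw [hF]
  refine ((hsq.mul_const _).sub_const _).congr_deriv ?_
  ring_nf

lemma isoF_strictAntiOn (α r : ℝ) (hr : 0 < r ∧ r < π / 2) :
    StrictAntiOn (isoF α r) (Set.Icc (α / 2 - π / 4) (α / 2)) := by
  refine strictAntiOn_of_deriv_neg (convex_Icc _ _)
    (fun b _ => (hasDerivAt_isoF α r b).continuousAt.continuousWithinAt) fun b hb => ?_
  rw [interior_Icc, Set.mem_Ioo] at hb
  rw [(hasDerivAt_isoF α r b).deriv]
  have hsin_r : 0 < sin (2 * r) := sin_pos_of_pos_of_lt_pi (by linarith) (by linarith)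
  have hsin_b : 0 < sin (2 * α - 4 * b) := sin_pos_of_pos_of_lt_pi (by linarith) (by linarith)
  linarith [mul_pos hsin_b (pow_pos hsin_r 2)]

theorem stmt_11_general (α r : ℝ) (hr : 0 < r ∧ r < π / 2) :
    (∀ b : ℝ,
      HasDerivAt (fun b => isoF α r b)
        (-2 * Real.sin (2 * α - 4 * b) * Real.sin (2 * r) ^ 2) b) ∧
    StrictAntiOn (fun b => isoF α r b) (Set.Icc (α / 2 - π / 4) (α / 2)) :=
  ⟨hasDerivAt_isoF α r, isoF_strictAntiOn α r hr⟩

theorem stmt_11 (α r : ℝ) (hα : 0 < α ∧ α < π / 2) (hr : 0 < r ∧ r < π / 2)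
    (hpos : 0 ≤ π ^ 2 / 4 - 2 * Real.cos α * (r * (π - r))) :
    (∀ b : ℝ,
      HasDerivAt (fun b => isoF α r b)
        (-2 * Real.sin (2 * α - 4 * b) * Real.sin (2 * r) ^ 2) b) ∧
    StrictAntiOn (fun b => isoF α r b) (Set.Icc (α / 2 - π / 4) (α / 2)) :=
  stmt_11_general α r hr
end

section
/- Define R(α) := π(1 − cos α)/(2 − cos α). Let 0 < α < π/2 and 0 < r ≤ π/2 with π²/4 − 2 cos α · r(π − r) ≥ 0. Then f(α, r, α/2) < 0 if and only if r < R(α); moreover f(α, R(α), α/2) = 0. -/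
/-!
With `b = α / 2` the first term of `isoF` vanishes and `cos² (2r) = sin² |π/2 - 2r|`, so the sign of
`isoF α r (α/2)` compares `sin²` at `|π/2 - 2r|` and at `√D`, where `D = isoDisc α r`. Both points lie in `[0, π/2]`, where `sin²` is strictly increasing,
so `isoF < 0` iff `(π/2 - 2r)² < D`. The identity `D = (π/2 - 2r)² + 2r (2 - cos α) (Rmax α - r)`
turns this into `r < Rmax α`, and shows that `D` is a perfect square at `r = Rmax α`.
-/

open Real

/-- The maximal arm truncation length for isosceles triunduloids. -/
noncomputable def Rmax (α : ℝ) : ℝ := π * (1 - Real.cos α) / (2 - Real.cos α)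

noncomputable def isoDisc (α r : ℝ) : ℝ := π ^ 2 / 4 - 2 * cos α * (r * (π - r))

lemma isoF_half (α r : ℝ) :
    isoF α r (α / 2) = sin |π / 2 - 2 * r| ^ 2 - sin √(isoDisc α r) ^ 2 := by
  have h_abs : sin |π / 2 - 2 * r| ^ 2 = sin (π / 2 - 2 * r) ^ 2 := by
    rcases abs_choice (π / 2 - 2 * r) with h | h <;> rw [h]
    rw [sin_neg, neg_sq]
  rw [h_abs, sin_pi_div_two_sub, isoF, isoDisc, mul_div_cancel₀ α two_ne_zero, sub_self, sin_zero]
  ring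

lemma isoDisc_eq (α r : ℝ) :
    isoDisc α r = (π / 2 - 2 * r) ^ 2 + 2 * r * (2 - cos α) * (Rmax α - r) := by
  have h : 2 - cos α ≠ 0 := by linarith [cos_le_one α]
  rw [isoDisc, Rmax]
  field_simp
  ring

lemma sqrt_isoDisc_le {α r : ℝ} (hα : 0 ≤ cos α) (hr₀ : 0 ≤ r) (hrπ : r ≤ π) :
    √(isoDisc α r) ≤ π / 2 := by
  rw [sqrt_le_left (by positivity), isoDisc]
  have : 0 ≤ cos α * (r * (π - r)) := by
    have := mul_nonneg hr₀ (sub_nonneg.2 hrπ)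
    positivity
  linarith

lemma strictMonoOn_sin_sq : StrictMonoOn (fun x => sin x ^ 2) (Set.Icc 0 (π / 2)) := by
  intro x hx y hy hxy
  have hx_nonneg : 0 ≤ sin x := sin_nonneg_of_nonneg_of_le_pi hx.1 (by linarith [hx.2, pi_pos])
  have hIcc : Set.Icc 0 (π / 2) ⊆ Set.Icc (-(π / 2)) (π / 2) :=
    Set.Icc_subset_Icc (by linarith [pi_pos]) le_rfl
  exact pow_lt_pow_left₀ (strictMonoOn_sin (hIcc hx) (hIcc hy) hxy) hx_nonneg two_ne_zero

theorem stmt_13 (α : ℝ) (hα : 0 < α ∧ α < π / 2) :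
    (∀ r : ℝ, 0 < r → r ≤ π / 2 →
      0 ≤ π ^ 2 / 4 - 2 * Real.cos α * (r * (π - r)) →
      (isoF α r (α / 2) < 0 ↔ r < Rmax α)) ∧
    isoF α (Rmax α) (α / 2) = 0 := by
  have hcos_pos : 0 < cos α := cos_pos_of_mem_Ioo ⟨by linarith, hα.2⟩
  have hcos_lt : cos α < 1 := by
    simpa using cos_lt_cos_of_nonneg_of_le_pi le_rfl (by linarith [pi_pos]) hα.1
  refine ⟨fun r hr₀ hr₂ _ => ?_, ?_⟩
  · have hdist : |π / 2 - 2 * r| ∈ Set.Icc 0 (π / 2) :=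
      ⟨abs_nonneg _, abs_le.2 ⟨by linarith, by linarith⟩⟩
    have hsqrt : √(isoDisc α r) ∈ Set.Icc 0 (π / 2) :=
      ⟨sqrt_nonneg _, sqrt_isoDisc_le hcos_pos.le hr₀.le (by linarith [pi_pos])⟩
    have hfactor : 0 < 2 * r * (2 - cos α) := by nlinarith
    rw [isoF_half, sub_neg, strictMonoOn_sin_sq.lt_iff_lt hdist hsqrt, lt_sqrt hdist.1, sq_abs,
      isoDisc_eq, lt_add_iff_pos_right, mul_pos_iff_of_pos_left hfactor, sub_pos]
  · rw [isoF_half, isoDisc_eq, sub_self, mul_zero, add_zero, sqrt_sq_eq_abs, sub_self]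
end

section
/- Define R(α) := π(1 − cos α)/(2 − cos α). Let 0 < α < π/2 and let r satisfy R(α) < r ≤ π/2 and π²/4 − 2 cos α · r(π − r) ≥ 0. Then f(α, r, b) > 0 for every real number b. In particular, f(α, r, ·) has no zeros when r > R(α). -/
open Real

theorem stmt_14 (α r : ℝ) (hα : 0 < α ∧ α < π / 2)
    (hr : Rmax α < r ∧ r ≤ π / 2)
    (hpos : 0 ≤ π ^ 2 / 4 - 2 * Real.cos α * (r * (π - r))) :
    (∀ b : ℝ, 0 < isoF α r b) ∧ ∀ b : ℝ, isoF α r b ≠ 0 := by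
  obtain ⟨hα0, hα2⟩ := hα
  obtain ⟨hr1, hr2⟩ := hr
  have hπ : 0 < π := Real.pi_pos
  have hcos : 0 < Real.cos α := Real.cos_pos_of_mem_Ioo ⟨by linarith, hα2⟩
  have hcos1 : Real.cos α < 1 := by
    have := Real.cos_lt_cos_of_nonneg_of_le_pi (le_refl 0) (by linarith) hα0
    rwa [Real.cos_zero] at this
  have h2c : 0 < 2 - Real.cos α := by linarith
  have hRpos : 0 < Rmax α := by
    unfold Rmax
    exact div_pos (by nlinarith) h2c
  have hr0 : 0 < r := lt_trans hRpos hr1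
  have hkey : π * (1 - Real.cos α) < r * (2 - Real.cos α) := by
    have := (div_lt_iff₀ h2c).mp hr1
    linarith
  set E : ℝ := π ^ 2 / 4 - 2 * Real.cos α * (r * (π - r)) with hE
  have hElt : E < (π / 2 - 2 * r) ^ 2 := by nlinarith
  have hEub : E ≤ π ^ 2 / 4 := by nlinarith
  have hsqrtE2 : Real.sqrt E ≤ π / 2 := by
    have : Real.sqrt E ≤ Real.sqrt (π ^ 2 / 4) := Real.sqrt_le_sqrt hEub
    rwa [show π ^ 2 / 4 = (π / 2) ^ 2 by ring, Real.sqrt_sq (by positivity)] at this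
  have hlt : Real.sqrt E < |π / 2 - 2 * r| := by
    have := Real.sqrt_lt_sqrt hpos hElt
    rwa [Real.sqrt_sq_eq_abs] at this
  have habs2 : |π / 2 - 2 * r| ≤ π / 2 := by
    rw [abs_le]; constructor <;> linarith
  have hsinlt : Real.sin (Real.sqrt E) < Real.sin |π / 2 - 2 * r| := by
    apply Real.strictMonoOn_sin ⟨by linarith [Real.sqrt_nonneg E], hsqrtE2⟩ ⟨by linarith [abs_nonneg (π / 2 - 2 * r)], habs2⟩ hlt
  have hsinnn : 0 ≤ Real.sin (Real.sqrt E) :=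
    Real.sin_nonneg_of_nonneg_of_le_pi (Real.sqrt_nonneg E) (by linarith)
  have hsq : Real.sin (Real.sqrt E) ^ 2 < Real.sin |π / 2 - 2 * r| ^ 2 :=
    pow_lt_pow_left₀ hsinlt hsinnn (by norm_num)
  have habseq : Real.sin |π / 2 - 2 * r| ^ 2 = Real.cos (2 * r) ^ 2 := by
    rcases abs_cases (π / 2 - 2 * r) with ⟨h, _⟩ | ⟨h, _⟩ <;> rw [h]
    · rw [Real.sin_pi_div_two_sub]
    · rw [Real.sin_neg, Real.sin_pi_div_two_sub]; ring
  rw [habseq] at hsq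
  have hmain : ∀ b : ℝ, 0 < isoF α r b := by
    intro b
    unfold isoF
    have h1 : 0 ≤ Real.sin (α - 2 * b) ^ 2 * Real.sin (2 * r) ^ 2 := by positivity
    rw [← hE]
    linarith
  exact ⟨hmain, fun b => ne_of_gt (hmain b)⟩
end

section
/- Define R(α) := π(1 − cos α)/(2 − cos α). Let 0 < α < π/2 and 0 < r < R(α). Then there exists a unique b ∈ (α/2 − π/4, α/2) with f(α, r, b) = 0. -/
/-!
Substituting `θ = α - 2b`, which runs through `(0, π/2)` as `b` runs through
`(α/2 - π/4, α/2)`, and writing `s = √(π²/4 - 2 cos α · r(π - r))`, the equation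
`f = 0` reads `sin² θ · sin²(2r) = sin² s - cos²(2r)`. Since `sin²` is a strictly
increasing bijection from `(0, π/2)` onto `(0, 1)`, it has exactly one solution iff
`cos²(2r) < sin² s < 1`, which holds as soon as `|π/2 - 2r| < s < π/2`. The upper
bound needs `cos α > 0`; the lower bound, squared, is equivalent to `r < R(α)`.
-/

open Real Set

lemma sin_sq_lt_sin_sq_of_abs_lt {u x : ℝ} (h : |u| < x) (hx : x ≤ π / 2) :
    sin u ^ 2 < sin x ^ 2 := by
  have habs : sin u ^ 2 = sin |u| ^ 2 := by
    rcases abs_choice u with hu | hu <;> rw [hu]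
    rw [sin_neg, neg_sq]
  have hmono : sin |u| < sin x :=
    strictMonoOn_sin ⟨by linarith [pi_pos, abs_nonneg u], by linarith⟩
      ⟨by linarith [pi_pos, abs_nonneg u], hx⟩ h
  have hnonneg : 0 ≤ sin |u| :=
    sin_nonneg_of_nonneg_of_le_pi (abs_nonneg u) (by linarith [pi_pos])
  rw [habs]
  exact pow_lt_pow_left₀ hmono hnonneg two_ne_zero

lemma existsUnique_mem_Ioo_sin_sq_eq {t : ℝ} (h0 : 0 < t) (h1 : t < 1) :
    ∃! θ, θ ∈ Ioo 0 (π / 2) ∧ sin θ ^ 2 = t := by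
  have hsqrt0 : 0 < √t := sqrt_pos.2 h0
  have hsqrt1 : √t < 1 := (sqrt_lt' one_pos).2 (by rwa [one_pow])
  refine ⟨arcsin √t, ⟨⟨arcsin_pos.2 hsqrt0, arcsin_lt_pi_div_two.2 hsqrt1⟩, ?_⟩, ?_⟩
  · rw [sin_arcsin (by linarith) hsqrt1.le, sq_sqrt h0.le]
  · rintro θ ⟨⟨hθ0, hθ1⟩, hθt⟩
    have hsin : sin θ = √t := by
      rw [← hθt, sqrt_sq (sin_nonneg_of_nonneg_of_le_pi hθ0.le (by linarith [pi_pos]))]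
    rw [← hsin, arcsin_sin (by linarith) hθ1.le]

lemma existsUnique_mem_Ioo_sin_sq_mul_add_eq {S C T : ℝ} (hSC : S ^ 2 + C ^ 2 = 1)
    (hlo : C ^ 2 < T) (hhi : T < 1) :
    ∃! θ, θ ∈ Ioo 0 (π / 2) ∧ sin θ ^ 2 * S ^ 2 + C ^ 2 = T := by
  have hS : 0 < S ^ 2 := by linarith
  have hiff : ∀ θ, sin θ ^ 2 * S ^ 2 + C ^ 2 = T ↔ sin θ ^ 2 = (T - C ^ 2) / S ^ 2 := by
    intro θ
    rw [eq_div_iff hS.ne']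
    constructor <;> intro h <;> linarith
  simp_rw [hiff]
  exact existsUnique_mem_Ioo_sin_sq_eq (div_pos (by linarith) hS)
    ((div_lt_one hS).2 (by linarith))

lemma Rmax_lt_pi_div_two {α : ℝ} (hc : 0 < cos α) : Rmax α < π / 2 := by
  have h2c : 0 < 2 - cos α := by linarith [cos_le_one α]
  rw [Rmax, div_lt_iff₀ h2c]
  nlinarith [pi_pos]

lemma sq_pi_div_two_sub_two_mul_lt_of_lt_Rmax {α r : ℝ} (hr0 : 0 < r) (hr : r < Rmax α) :
    (π / 2 - 2 * r) ^ 2 < π ^ 2 / 4 - 2 * cos α * (r * (π - r)) := by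
  have h2c : 0 < 2 - cos α := by linarith [cos_le_one α]
  rw [Rmax, lt_div_iff₀ h2c] at hr
  nlinarith

theorem stmt_15 (α r : ℝ) (hα : 0 < α ∧ α < π / 2) (hr : 0 < r ∧ r < Rmax α) :
    ∃! b : ℝ, b ∈ Set.Ioo (α / 2 - π / 4) (α / 2) ∧ isoF α r b = 0 := by
  obtain ⟨hα0, hαπ⟩ := hα
  obtain ⟨hr0, hrR⟩ := hr
  have hc : 0 < cos α := cos_pos_of_mem_Ioo ⟨by linarith, hαπ⟩
  have hrπ : r < π / 2 := hrR.trans (Rmax_lt_pi_div_two hc)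
  set D := π ^ 2 / 4 - 2 * cos α * (r * (π - r))
  have hD_lo : (π / 2 - 2 * r) ^ 2 < D := sq_pi_div_two_sub_two_mul_lt_of_lt_Rmax hr0 hrR
  have hD_hi : D < (π / 2) ^ 2 := by
    simp only [D]
    nlinarith [mul_pos hc (mul_pos hr0 (by linarith : 0 < π - r))]
  have hs_lo : |π / 2 - 2 * r| < √D :=
    abs_lt_of_sq_lt_sq (by rwa [sq_sqrt ((sq_nonneg _).trans hD_lo.le)]) (sqrt_nonneg D)
  have hs_hi : √D < π / 2 := (sqrt_lt' (by positivity)).2 hD_hi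
  have hcos : cos (2 * r) ^ 2 < sin √D ^ 2 := by
    rw [← sin_pi_div_two_sub]
    exact sin_sq_lt_sin_sq_of_abs_lt hs_lo hs_hi.le
  have hsin : sin √D ^ 2 < 1 := by
    simpa using sin_sq_lt_sin_sq_of_abs_lt ((abs_of_nonneg (sqrt_nonneg D)).trans_lt hs_hi) le_rfl
  obtain ⟨θ, ⟨⟨hθ0, hθπ⟩, hθ⟩, huniq⟩ :=
    existsUnique_mem_Ioo_sin_sq_mul_add_eq (sin_sq_add_cos_sq (2 * r)) hcos hsin
  refine ⟨(α - θ) / 2, ⟨⟨by linarith, by linarith⟩, ?_⟩, ?_⟩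
  · rw [isoF, sub_eq_zero, ← hθ]
    ring_nf
  · rintro b ⟨⟨hb0, hbπ⟩, hb⟩
    have : α - 2 * b = θ := huniq _ ⟨⟨by linarith, by linarith⟩, sub_eq_zero.1 hb⟩
    linarith
end

section
/- For every α with 0 < α ≤ π/3 (equivalently 1/2 ≤ cos α < 1), the inequality π(1 − cos α)/(2 − cos α) ≤ (π/2)(1 − √(1 − 1/(2 cos α))) holds, with equality if and only if cos α = 2/3. -/
open Real

theorem stmt_16 (α : ℝ) (hα0 : 0 < α) (hα : α ≤ π / 3) :
    π * (1 - Real.cos α) / (2 - Real.cos α) ≤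
      (π / 2) * (1 - Real.sqrt (1 - 1 / (2 * Real.cos α))) ∧
    (π * (1 - Real.cos α) / (2 - Real.cos α) =
      (π / 2) * (1 - Real.sqrt (1 - 1 / (2 * Real.cos α))) ↔
      Real.cos α = 2 / 3) := by
  have hπ : 0 < π := Real.pi_pos
  set c := Real.cos α with hcdef
  have hc1 : 1/2 ≤ c := by
    have h := Real.cos_le_cos_of_nonneg_of_le_pi hα0.le (by linarith) hα
    rwa [Real.cos_pi_div_three] at h
  have hc2 : c < 1 := by
    have h := Real.cos_lt_cos_of_nonneg_of_le_pi le_rfl (by linarith) hα0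
    simpa [hcdef] using h
  have hc0 : (0:ℝ) < c := by linarith
  have h2c : (0:ℝ) < 2 - c := by linarith
  have hnn : (0:ℝ) ≤ 1 - 1/(2*c) := by
    rw [sub_nonneg, div_le_one (by linarith)]; linarith
  have key : π * (1 - c) / (2 - c) = (π/2) * (1 - c/(2-c)) := by
    field_simp; ring
  have hle2 : 1 - 1/(2*c) ≤ (c/(2-c))^2 := by
    have h1 : 1 - 1/(2*c) = (2*c-1)/(2*c) := by field_simp
    rw [h1, div_pow, div_le_div_iff₀ (by positivity) (by positivity)]
    nlinarith [sq_nonneg (3*c - 2)]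
  have hs_le : Real.sqrt (1 - 1/(2*c)) ≤ c/(2-c) := by
    rw [show c/(2-c) = Real.sqrt ((c/(2-c))^2) from (Real.sqrt_sq (by positivity)).symm]
    exact Real.sqrt_le_sqrt hle2
  constructor
  · rw [key]
    have : 1 - c/(2-c) ≤ 1 - Real.sqrt (1 - 1/(2*c)) := by linarith
    nlinarith [this, hπ]
  · constructor
    · intro h
      rw [key] at h
      have hπ2 : (π/2) ≠ 0 := by positivity
      have h' := mul_left_cancel₀ hπ2 h
      have hs_eq : Real.sqrt (1 - 1/(2*c)) = c/(2-c) := by linarith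
      have hsq : 1 - 1/(2*c) = (c/(2-c))^2 := by
        rw [← Real.sq_sqrt hnn, hs_eq]
      have h3 : (3*c - 2)^2 = 0 := by
        rw [div_pow] at hsq
        field_simp at hsq
        nlinarith [hsq]
      have := pow_eq_zero_iff (n := 2) (by norm_num) |>.mp h3
      linarith
    · intro h
      rw [key, h]
      have : (1:ℝ) - 1/(2*(2/3)) = (1/2)^2 := by norm_num
      rw [this, Real.sqrt_sq (by norm_num)]
      norm_num
end

section
/- Let 0 < α < π/2, r ∈ (0, π/2], l ∈ (0, π/4], and b ∈ ℝ satisfy the balancing equation l(π − 2l) = cos α · r(π − r) and the closing equation cos²(2l) = sin²(α − 2b)·sin²(2r) + cos²(2r). Then r/π ≤ (1 − cos α)/(2 − cos α) and 2l/π ≤ min{ cos α/(2 − cos α), 1 − cos α/(2 − cos α) }; consequently 2r/π + 2l/π ≤ min{ 1, 4(1 − cos α)/(2 − cos α) }. -/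
open Real

theorem stmt_19 (α r l b : ℝ) (hα : 0 < α ∧ α < π / 2)
    (hr : 0 < r ∧ r ≤ π / 2) (hl : 0 < l ∧ l ≤ π / 4)
    (hbal : l * (π - 2 * l) = Real.cos α * (r * (π - r)))
    (hclose : Real.cos (2 * l) ^ 2 =
      Real.sin (α - 2 * b) ^ 2 * Real.sin (2 * r) ^ 2 + Real.cos (2 * r) ^ 2) :
    r / π ≤ (1 - Real.cos α) / (2 - Real.cos α) ∧
    2 * l / π ≤ min (Real.cos α / (2 - Real.cos α))
      (1 - Real.cos α / (2 - Real.cos α)) ∧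
    2 * r / π + 2 * l / π ≤
      min 1 (4 * (1 - Real.cos α) / (2 - Real.cos α)) := by
  obtain ⟨hα0, hα1⟩ := hα
  obtain ⟨hr0, hr1⟩ := hr
  obtain ⟨hl0, hl1⟩ := hl
  have hπ : (0:ℝ) < π := Real.pi_pos
  have hc0 : 0 < Real.cos α := Real.cos_pos_of_mem_Ioo ⟨by linarith, hα1⟩
  have hc1 : Real.cos α < 1 := by
    have := Real.cos_lt_cos_of_nonneg_of_le_pi (le_refl 0) (by linarith) hα0
    simpa using this
  have h2c : 0 < 2 - Real.cos α := by linarith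
  -- sin²(2l) ≤ sin²(2r)
  have hsq : Real.sin (2 * l) ^ 2 ≤ Real.sin (2 * r) ^ 2 := by
    have h1 := Real.sin_sq_add_cos_sq (2 * l)
    have h2 := Real.sin_sq_add_cos_sq (2 * r)
    nlinarith [mul_nonneg (sq_nonneg (Real.sin (α - 2*b))) (sq_nonneg (Real.sin (2*r)))]
  have hs2l : 0 ≤ Real.sin (2 * l) :=
    Real.sin_nonneg_of_nonneg_of_le_pi (by linarith) (by linarith)
  have hs2r : 0 ≤ Real.sin (2 * r) :=
    Real.sin_nonneg_of_nonneg_of_le_pi (by linarith) (by linarith)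
  have hsle : Real.sin (2 * l) ≤ Real.sin (2 * r) := by nlinarith
  -- 2l ≤ 2r
  have hlr : 2 * l ≤ 2 * r := by
    by_contra h
    push_neg at h
    have := Real.strictMonoOn_sin (a := 2*r) (b := 2*l)
      (Set.mem_Icc.mpr ⟨by linarith, by linarith⟩)
      (Set.mem_Icc.mpr ⟨by linarith, by linarith⟩) h
    linarith
  -- 2l ≤ π − 2r
  have hlr2 : 2 * l ≤ π - 2 * r := by
    by_contra h
    push_neg at h
    have hmono := Real.strictMonoOn_sin (a := π - 2*r) (b := 2*l)
      (Set.mem_Icc.mpr ⟨by linarith, by linarith⟩)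
      (Set.mem_Icc.mpr ⟨by linarith, by linarith⟩) h
    rw [Real.sin_pi_sub] at hmono
    linarith
  -- key: l(π−2l) ≤ r(π−2r)
  have hkey : l * (π - 2 * l) ≤ r * (π - 2 * r) := by nlinarith
  -- goal 1
  have hA : r / π ≤ (1 - Real.cos α) / (2 - Real.cos α) := by
    rw [div_le_div_iff₀ hπ h2c]
    nlinarith [hbal, hkey, hr0, mul_pos hr0 (show (0:ℝ) < π - r by linarith)]
  -- goal 2a
  have hB1 : 2 * l / π ≤ Real.cos α / (2 - Real.cos α) := by
    rw [div_le_div_iff₀ hπ h2c]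
    have h1 : 0 ≤ l * ((π - 2*r) - 2*l) * ((π - 2*r) + 2*l) := by
      apply mul_nonneg
      · apply mul_nonneg hl0.le; linarith
      · linarith
    nlinarith [mul_pos hr0 (show (0:ℝ) < π - r by linarith)]
  -- goal 2b
  have hB2 : 2 * l / π ≤ 1 - Real.cos α / (2 - Real.cos α) := by
    have h1 : 2 * l / π ≤ 2 * (r / π) := by
      rw [mul_div_assoc']
      gcongr
    have h2 : 1 - Real.cos α / (2 - Real.cos α) = 2 * ((1 - Real.cos α) / (2 - Real.cos α)) := by
      field_simp
      ring
    rw [h2]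
    linarith [mul_le_mul_of_nonneg_left hA (by norm_num : (0:ℝ) ≤ 2)]
  refine ⟨hA, le_min hB1 hB2, le_min ?_ ?_⟩
  · have : (2 * r + 2 * l) / π ≤ 1 := by
      rw [div_le_one hπ]; linarith
    calc 2 * r / π + 2 * l / π = (2 * r + 2 * l) / π := by ring
      _ ≤ 1 := this
  · have h2 : 4 * (1 - Real.cos α) / (2 - Real.cos α)
        = 2 * ((1 - Real.cos α) / (2 - Real.cos α)) + 2 * ((1 - Real.cos α) / (2 - Real.cos α)) := by
      ring
    have h3 : 2 * r / π = 2 * (r / π) := by ring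
    have h4 : 2 * l / π ≤ 2 * (r / π) := by
      rw [mul_div_assoc']
      gcongr
    rw [h2, h3]
    have h5 : 2 * (r / π) ≤ 2 * ((1 - Real.cos α) / (2 - Real.cos α)) := by linarith
    linarith [hB2, h5, (by field_simp; ring : 1 - Real.cos α / (2 - Real.cos α) = 2 * ((1 - Real.cos α) / (2 - Real.cos α)))]
end
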